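/- arXiv:1503.03610 — 8 statements merged into one kernel-verified Lean document; each statement's English description precedes it below -/
import Mathlib

section
/- Let n ∈ ℕ and let u, v : ℝ → Mₙ(ℝ) be continuous. Suppose γ, σ : ℝ → Mₙ(ℝ) satisfy: γ(0) = 1, σ(0) = 0, γ(t) is invertible for every t ∈ ℝ, and for every t ∈ ℝ one has HasDerivAt γ (γ(t)*u(t)) t and HasDerivAt σ (γ(t)*v(t) + σ(t)*u(t)) t. Then for every t ∈ ℝ, σ(t) = (∫_0^t γ(s)*v(s)*(γ(s))⁻¹ ds) * γ(t). -/
/-!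
Since `γ' = γ u`, the inverse satisfies `(γ⁻¹)' = -γ⁻¹ γ' γ⁻¹ = -u γ⁻¹`, so the product rule gives
`(σ γ⁻¹)' = (γ v + σ u) γ⁻¹ - σ u γ⁻¹ = γ v γ⁻¹`. With `σ 0 = 0` the fundamental theorem of
calculus yields `σ t γ(t)⁻¹ = ∫₀ᵗ γ v γ⁻¹`. This works in any Banach algebra; the entrywise norm
on matrices is not submultiplicative, so the matrix case is transported along the algebra
isomorphism with the operators on Euclidean space.
-/

attribute [local instance] Matrix.normedAddCommGroup Matrix.normedSpace

open MeasureTheory intervalIntegral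
open scoped Ring

theorem MulEquiv.map_ringInverse {M N : Type*} [MonoidWithZero M] [MonoidWithZero N]
    (f : M ≃* N) (a : M) : f a⁻¹ʳ = (f a)⁻¹ʳ := by
  by_cases ha : IsUnit a
  · obtain ⟨u, rfl⟩ := ha
    rw [Ring.inverse_unit]
    calc f ↑u⁻¹ = ↑(Units.map (f : M →* N) u)⁻¹ := rfl
      _ = (f u)⁻¹ʳ := (Ring.inverse_unit _).symm
  · rw [Ring.inverse_non_unit a ha, Ring.inverse_non_unit _ ((isUnit_map_iff f a).not.2 ha)]
    exact map_zero f

theorem ContinuousLinearEquiv.intervalIntegral_comp_comm {E F : Type*} [NormedAddCommGroup E]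
    [NormedSpace ℝ E] [NormedAddCommGroup F] [NormedSpace ℝ F] (L : E ≃L[ℝ] F) (f : ℝ → E)
    (a b : ℝ) : ∫ x in a..b, L (f x) = L (∫ x in a..b, f x) := by
  simp only [intervalIntegral, L.integral_comp_comm, map_sub]

theorem HasDerivAt.ringInverse {𝕜 𝔸 : Type*} [NontriviallyNormedField 𝕜] [NormedRing 𝔸]
    [NormedAlgebra 𝕜 𝔸] [HasSummableGeomSeries 𝔸] {γ : 𝕜 → 𝔸} {γ' : 𝔸} {t : 𝕜}
    (h : HasDerivAt γ γ' t) (ht : IsUnit (γ t)) :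
    HasDerivAt (fun s => (γ s)⁻¹ʳ) (-((γ t)⁻¹ʳ * γ' * (γ t)⁻¹ʳ)) t := by
  obtain ⟨x, hx⟩ := ht
  have := (hasFDerivAt_ringInverse (𝕜 := 𝕜) x).comp_hasDerivAt_of_eq t h hx
  rw [← hx, Ring.inverse_unit]
  simpa [Function.comp_def] using this

section BanachAlgebra

variable {𝔸 : Type*} [NormedRing 𝔸] [NormedAlgebra ℝ 𝔸] [CompleteSpace 𝔸]

theorem hasDerivAt_mul_ringInverse_of_variation {γ σ : ℝ → 𝔸} {u v : 𝔸} {t : ℝ}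
    (hγ : HasDerivAt γ (γ t * u) t) (hσ : HasDerivAt σ (γ t * v + σ t * u) t)
    (ht : IsUnit (γ t)) :
    HasDerivAt (fun s => σ s * (γ s)⁻¹ʳ) (γ t * v * (γ t)⁻¹ʳ) t := by
  convert hσ.fun_mul (hγ.ringInverse ht) using 1
  rw [Ring.inverse_mul_cancel_left _ _ ht]
  noncomm_ring

theorem variation_eq_integral_conj_mul {u v γ σ : ℝ → 𝔸} (hv : Continuous v) (hσ0 : σ 0 = 0)
    (hγinv : ∀ t, IsUnit (γ t)) (hγ' : ∀ t, HasDerivAt γ (γ t * u t) t)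
    (hσ' : ∀ t, HasDerivAt σ (γ t * v t + σ t * u t) t) (t : ℝ) :
    σ t = (∫ s in (0:ℝ)..t, γ s * v s * (γ s)⁻¹ʳ) * γ t := by
  have hconj : Continuous fun s => γ s * v s * (γ s)⁻¹ʳ :=
    continuous_iff_continuousAt.2 fun s =>
      ((hγ' s).continuousAt.mul hv.continuousAt).mul ((hγ' s).ringInverse (hγinv s)).continuousAt
  rw [integral_eq_sub_of_hasDerivAt
    (fun s _ => hasDerivAt_mul_ringInverse_of_variation (hγ' s) (hσ' s) (hγinv s))
    (hconj.intervalIntegrable _ _), hσ0, zero_mul, sub_zero,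
    Ring.inverse_mul_cancel_right _ _ (hγinv t)]

end BanachAlgebra

section Matrix

variable (m : Type*) [Fintype m] [DecidableEq m]

noncomputable def Matrix.toEuclideanCLE :
    Matrix m m ℝ ≃L[ℝ] (EuclideanSpace ℝ m →L[ℝ] EuclideanSpace ℝ m) :=
  (Matrix.toEuclideanCLM (n := m) (𝕜 := ℝ)).toAlgEquiv.toLinearEquiv.toContinuousLinearEquiv

variable {m}

theorem Matrix.toEuclideanCLE_mul (A B : Matrix m m ℝ) :
    toEuclideanCLE m (A * B) = toEuclideanCLE m A * toEuclideanCLE m B :=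
  map_mul (toEuclideanCLM (n := m) (𝕜 := ℝ)) A B

theorem Matrix.toEuclideanCLE_inv (A : Matrix m m ℝ) :
    toEuclideanCLE m A⁻¹ = (toEuclideanCLE m A)⁻¹ʳ := by
  rw [nonsing_inv_eq_ringInverse]
  exact (toEuclideanCLM (n := m) (𝕜 := ℝ)).toMulEquiv.map_ringInverse A

theorem Matrix.isUnit_toEuclideanCLE {A : Matrix m m ℝ} (hA : IsUnit A) :
    IsUnit (toEuclideanCLE m A) :=
  hA.map (toEuclideanCLM (n := m) (𝕜 := ℝ))

theorem HasDerivAt.toEuclideanCLE {f : ℝ → Matrix m m ℝ} {f' : Matrix m m ℝ} {t : ℝ}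
    (h : HasDerivAt f f' t) :
    HasDerivAt (fun s => Matrix.toEuclideanCLE m (f s)) (Matrix.toEuclideanCLE m f') t :=
  (Matrix.toEuclideanCLE m).hasFDerivAt.comp_hasDerivAt t h

end Matrix

theorem sard_endpoint_variation_general (n : ℕ) (u v γ σ : ℝ → Matrix (Fin n) (Fin n) ℝ)
    (hv : Continuous v)
    (hσ0 : σ 0 = 0)
    (hγinv : ∀ t : ℝ, IsUnit (γ t))
    (hγ' : ∀ t : ℝ, HasDerivAt γ (γ t * u t) t)
    (hσ' : ∀ t : ℝ, HasDerivAt σ (γ t * v t + σ t * u t) t) :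
    ∀ t : ℝ, σ t = (∫ s in (0:ℝ)..t, γ s * v s * (γ s)⁻¹) * γ t := by
  intro t
  let φ := Matrix.toEuclideanCLE (Fin n)
  have key := variation_eq_integral_conj_mul (u := fun s => φ (u s)) (v := fun s => φ (v s))
    (γ := fun s => φ (γ s)) (σ := fun s => φ (σ s)) (φ.continuous.comp hv) (by rw [hσ0, map_zero])
    (fun s => Matrix.isUnit_toEuclideanCLE (hγinv s))
    (fun s => by simpa only [Matrix.toEuclideanCLE_mul] using (hγ' s).toEuclideanCLE)
    (fun s => by simpa only [map_add, Matrix.toEuclideanCLE_mul] using (hσ' s).toEuclideanCLE) t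
  have hcomm : ∫ s in (0:ℝ)..t, φ (γ s * v s * (γ s)⁻¹) =
      φ (∫ s in (0:ℝ)..t, γ s * v s * (γ s)⁻¹) :=
    φ.intervalIntegral_comp_comm _ _ _
  apply φ.injective
  calc φ (σ t) = (∫ s in (0:ℝ)..t, φ (γ s * v s * (γ s)⁻¹)) * φ (γ t) := by
        simpa only [φ, Matrix.toEuclideanCLE_mul, Matrix.toEuclideanCLE_inv] using key
    _ = φ (∫ s in (0:ℝ)..t, γ s * v s * (γ s)⁻¹) * φ (γ t) := congrArg (· * φ (γ t)) hcomm
    _ = φ ((∫ s in (0:ℝ)..t, γ s * v s * (γ s)⁻¹) * γ t) := (Matrix.toEuclideanCLE_mul _ _).symm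

/-- The key matrix-coordinate computation in the proof of the formula for the differential of
the endpoint map: the variation `σ` of the solution of `γ' = γ·u` equals
`(∫₀ᵗ γ(s)·v(s)·γ(s)⁻¹ ds) · γ(t)`. -/
theorem sard_endpoint_variation (n : ℕ) (u v γ σ : ℝ → Matrix (Fin n) (Fin n) ℝ)
    (hu : Continuous u) (hv : Continuous v)
    (hγ0 : γ 0 = 1) (hσ0 : σ 0 = 0)
    (hγinv : ∀ t : ℝ, IsUnit (γ t))
    (hγ' : ∀ t : ℝ, HasDerivAt γ (γ t * u t) t)
    (hσ' : ∀ t : ℝ, HasDerivAt σ (γ t * v t + σ t * u t) t) :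
    ∀ t : ℝ, σ t = (∫ s in (0:ℝ)..t, γ s * v s * (γ s)⁻¹) * γ t :=
  sard_endpoint_variation_general n u v γ σ hv hσ0 hγinv hγ' hσ'
end

section
/- Let n ∈ ℕ, let γ : ℝ → Mₙ(ℝ) be continuous with γ(t) invertible for every t ∈ [0,1], and let V be a linear subspace of Mₙ(ℝ). Then the set of matrices of the form ∫_0^1 γ(t)*v(t)*(γ(t))⁻¹ dt, where v ranges over all continuous functions v : ℝ → Mₙ(ℝ) with v(t) ∈ V for all t ∈ [0,1], is equal to the linear span of the set { γ(t)*x*(γ(t))⁻¹ : t ∈ [0,1], x ∈ V }. -/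
/-!
Write `L t x = γ t * x * (γ t)⁻¹`. Each integrand `L t (v t)` lies in the span of the
`L t x`, and a finite-dimensional subspace contains the integral of any function valued in it.
Conversely, the integrals of admissible controls form a subspace `S`. If a functional `φ`
vanishes on `S`, test it on the control `v t = φ (L t x) • x`: this gives
`∫ φ (L t x) ^ 2 dt = 0`, so `φ (L t x) = 0` on `[0, 1]` by continuity. Hence the span lies
in `S`.
-/

open MeasureTheory intervalIntegral Set

theorem ContinuousOn.matrix_inv {ι R X : Type*} [Fintype ι] [DecidableEq ι] [Field R]
    [TopologicalSpace R] [IsTopologicalRing R] [ContinuousInv₀ R] [TopologicalSpace X]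
    {A : X → Matrix ι ι R} {s : Set X} (hA : ContinuousOn A s)
    (hunit : ∀ x ∈ s, IsUnit (A x)) :
    ContinuousOn (fun x => (A x)⁻¹) s := by
  intro x hx
  have hdet : (A x).det ≠ 0 := ((Matrix.isUnit_iff_isUnit_det _).mp (hunit x hx)).ne_zero
  refine (continuousAt_matrix_inv _ ?_).comp_continuousWithinAt (hA x hx)
  rw [Ring.inverse_eq_inv']
  exact continuousAt_inv₀ hdet

theorem eqOn_zero_of_integral_mul_self_eq_zero {h : ℝ → ℝ} {a b : ℝ} (hab : a ≠ b)
    (hh : ContinuousOn h (uIcc a b)) (h0 : ∫ t in a..b, h t * h t = 0) :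
    EqOn h 0 (uIcc a b) := by
  wlog hlt : a < b generalizing a b
  · rw [uIcc_comm] at hh ⊢
    exact this hab.symm hh (by rw [integral_symm, h0, neg_zero]) (hab.lt_or_gt.resolve_left hlt)
  rw [uIcc_of_lt hlt] at hh ⊢
  intro c hc
  by_contra hne
  exact h0.not_gt <| integral_pos hlt (hh.mul hh) (fun t _ => mul_self_nonneg (h t))
    ⟨c, hc, mul_self_pos.mpr hne⟩

section

variable {E F : Type*} [NormedAddCommGroup E] [NormedSpace ℝ E]
  [NormedAddCommGroup F] [NormedSpace ℝ F] [FiniteDimensional ℝ F]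

theorem Module.Dual.intervalIntegral_comp_comm (φ : Module.Dual ℝ F) {f : ℝ → F} {a b : ℝ}
    (hf : IntervalIntegrable f volume a b) : ∫ t in a..b, φ (f t) = φ (∫ t in a..b, f t) :=
  (LinearMap.toContinuousLinearMap φ).intervalIntegral_comp_comm hf

theorem Submodule.intervalIntegral_mem {S : Submodule ℝ F} {f : ℝ → F} {a b : ℝ}
    (hf : ∀ t ∈ uIcc a b, f t ∈ S) : ∫ t in a..b, f t ∈ S := by
  by_cases hfi : IntervalIntegrable f volume a b
  · rw [← Subspace.forall_mem_dualAnnihilator_apply_eq_zero_iff]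
    intro φ hφ
    rw [← φ.intervalIntegral_comp_comm hfi, ← intervalIntegral.integral_zero]
    exact integral_congr fun t ht => (Submodule.mem_dualAnnihilator φ).mp hφ _ (hf t ht)
  · rw [integral_undef hfi]
    exact S.zero_mem

variable {L : ℝ → E →L[ℝ] F} {a b : ℝ}

/-- The image of the differential of the endpoint map when `L t = Ad (γ t)`. -/
def controlImage (hL : ContinuousOn L (uIcc a b)) (V : Submodule ℝ E) : Submodule ℝ F where
  carrier := {M | ∃ v : ℝ → E, Continuous v ∧ (∀ t ∈ uIcc a b, v t ∈ V) ∧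
    M = ∫ t in a..b, L t (v t)}
  zero_mem' := ⟨0, continuous_const, fun _ _ => V.zero_mem, by simp⟩
  add_mem' := by
    rintro _ _ ⟨v, hv, hvV, rfl⟩ ⟨w, hw, hwV, rfl⟩
    refine ⟨v + w, hv.add hw, fun t ht => V.add_mem (hvV t ht) (hwV t ht), ?_⟩
    rw [← integral_add (hL.clm_apply hv.continuousOn).intervalIntegrable
      (hL.clm_apply hw.continuousOn).intervalIntegrable]
    simp only [Pi.add_apply, map_add]
  smul_mem' := by
    rintro c _ ⟨v, hv, hvV, rfl⟩
    refine ⟨c • v, hv.const_smul c, fun t ht => V.smul_mem c (hvV t ht), ?_⟩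
    rw [← intervalIntegral.integral_smul]
    simp only [Pi.smul_apply, map_smul]

variable {hL : ContinuousOn L (uIcc a b)} {V : Submodule ℝ E}

theorem controlImage_le_span :
    controlImage hL V ≤ Submodule.span ℝ {M | ∃ t ∈ uIcc a b, ∃ x ∈ V, M = L t x} := by
  rintro _ ⟨v, -, hvV, rfl⟩
  exact Submodule.intervalIntegral_mem fun t ht =>
    Submodule.subset_span ⟨t, ht, v t, hvV t ht, rfl⟩

theorem apply_mem_controlImage (hab : a ≠ b) {t₀ : ℝ} (ht₀ : t₀ ∈ uIcc a b) {x : E}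
    (hx : x ∈ V) : L t₀ x ∈ controlImage hL V := by
  rw [← Subspace.forall_mem_dualAnnihilator_apply_eq_zero_iff]
  intro φ hφ
  set h : ℝ → ℝ := fun t => φ (L t x)
  have hh : ContinuousOn h (uIcc a b) :=
    (LinearMap.continuous_of_finiteDimensional φ).comp_continuousOn
      (hL.clm_apply continuousOn_const)
  set g := IccExtend (inf_le_sup : a ⊓ b ≤ a ⊔ b) (domRestrict (uIcc a b) h)
  have hg : Continuous g := continuous_IccExtend_iff.mpr hh.domRestrict
  have hgh : EqOn g h (uIcc a b) := fun t ht => IccExtend_of_mem _ _ ht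
  have hmem : ∫ t in a..b, L t (g t • x) ∈ controlImage hL V :=
    ⟨fun t => g t • x, hg.smul continuous_const, fun _ _ => V.smul_mem _ hx, rfl⟩
  refine eqOn_zero_of_integral_mul_self_eq_zero hab hh ?_ ht₀
  calc ∫ t in a..b, h t * h t = ∫ t in a..b, φ (L t (g t • x)) :=
        integral_congr fun t ht => by simp only [map_smul, smul_eq_mul, hgh ht, h]
    _ = 0 := by
      rw [φ.intervalIntegral_comp_comm]
      · exact (Submodule.mem_dualAnnihilator φ).mp hφ _ hmem
      · exact (hL.clm_apply (hg.smul continuous_const).continuousOn).intervalIntegrable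

theorem setOf_intervalIntegral_eq_span (hL : ContinuousOn L (uIcc a b)) (V : Submodule ℝ E)
    (hab : a ≠ b) :
    {M | ∃ v : ℝ → E, Continuous v ∧ (∀ t ∈ uIcc a b, v t ∈ V) ∧
        M = ∫ t in a..b, L t (v t)} =
      ↑(Submodule.span ℝ {M | ∃ t ∈ uIcc a b, ∃ x ∈ V, M = L t x}) := by
  refine congrArg SetLike.coe (le_antisymm (controlImage_le_span (hL := hL)) ?_)
  refine Submodule.span_le.mpr ?_
  rintro _ ⟨t, ht, x, hx, rfl⟩
  exact apply_mem_controlImage hab ht hx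

end

attribute [local instance] Matrix.normedAddCommGroup Matrix.normedSpace

/-- Image of the differential of the endpoint map, in matrix coordinates: the set of integrals
`∫₀¹ γ(t)·v(t)·γ(t)⁻¹ dt` over continuous controls `v` valued in the subspace `V` equals the
linear span of `{γ(t)·x·γ(t)⁻¹ : t ∈ [0,1], x ∈ V}`. -/
theorem sard_image_dEnd (n : ℕ) (γ : ℝ → Matrix (Fin n) (Fin n) ℝ)
    (hγ : Continuous γ) (hγinv : ∀ t ∈ Set.Icc (0:ℝ) 1, IsUnit (γ t))
    (V : Submodule ℝ (Matrix (Fin n) (Fin n) ℝ)) :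
    {M : Matrix (Fin n) (Fin n) ℝ | ∃ v : ℝ → Matrix (Fin n) (Fin n) ℝ,
        Continuous v ∧ (∀ t ∈ Set.Icc (0:ℝ) 1, v t ∈ V) ∧
        M = ∫ t in (0:ℝ)..1, γ t * v t * (γ t)⁻¹} =
      ↑(Submodule.span ℝ
        {M : Matrix (Fin n) (Fin n) ℝ | ∃ t ∈ Set.Icc (0:ℝ) 1, ∃ x ∈ V,
          M = γ t * x * (γ t)⁻¹}) := by
  let conj (t : ℝ) : Matrix (Fin n) (Fin n) ℝ →L[ℝ] Matrix (Fin n) (Fin n) ℝ :=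
    LinearMap.toContinuousLinearMap (LinearMap.mulLeftRight ℝ (γ t, (γ t)⁻¹))
  have hinv : ContinuousOn (fun t => (γ t)⁻¹) (Icc 0 1) := hγ.continuousOn.matrix_inv hγinv
  have hconj : ContinuousOn conj (uIcc 0 1) := by
    rw [uIcc_of_le zero_le_one]
    exact continuousOn_clm_apply.mpr fun x => (hγ.continuousOn.mul continuousOn_const).mul hinv
  have hspan := setOf_intervalIntegral_eq_span hconj V zero_ne_one
  rwa [uIcc_of_le zero_le_one] at hspan
end

section
/- Let n ∈ ℕ, let u : ℝ → Mₙ(ℝ) be continuous, and let γ : ℝ → Mₙ(ℝ) satisfy: γ(t) is invertible for every t and HasDerivAt γ (γ(t)*u(t)) t for every t ∈ ℝ. Let λ : ℝ → (Mₙ(ℝ) →ₗ[ℝ] ℝ) be a family of linear functionals. Define ρ(t)(X) := λ(t)(X*γ(t)) and η(t)(X) := λ(t)(γ(t)*X). Then ρ is a constant function of t if and only if for every t ∈ ℝ and every X ∈ Mₙ(ℝ), the function s ↦ η(s)(X) has derivative η(t)(u(t)*X − X*u(t)) at t. -/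
attribute [local instance] Matrix.normedAddCommGroup Matrix.normedSpace

/-!
Write `ρ` and `η` for the right and left trivializations of `λ` along `γ`, so that
`η(s)(X) = ρ(s)(γ X γ⁻¹)` and `ρ(s)(X) = η(s)(γ⁻¹ X γ)`. From `γ' = γ u` one gets
`(γ⁻¹)' = -u γ⁻¹`, so `γ X γ⁻¹` and `γ⁻¹ X γ` have derivatives `γ [u, X] γ⁻¹` and `[γ⁻¹ X γ, u]`.
If `ρ` is constant, differentiating the first identity gives the adjoint equation. Conversely, if
`η` solves it, the product rule applied to the second identity gives `ρ' = 0`, the two terms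
cancelling. That product rule needs only the pointwise derivatives `s ↦ η(s)(X)`, because the matrix
space is finite-dimensional.
-/

open Filter Topology

section FiniteDimensional

variable {𝕜 : Type*} [NontriviallyNormedField 𝕜] [CompleteSpace 𝕜]
  {E F G : Type*} [NormedAddCommGroup E] [NormedSpace 𝕜 E] [FiniteDimensional 𝕜 E]
  [NormedAddCommGroup F] [NormedSpace 𝕜 F] [NormedAddCommGroup G] [NormedSpace 𝕜 G]
  {t : 𝕜}

theorem HasDerivAt.linearMap_apply (L : E →ₗ[𝕜] F) {c : 𝕜 → E} {c' : E}
    (hc : HasDerivAt c c' t) : HasDerivAt (fun s => L (c s)) (L c') t :=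
  (LinearMap.toContinuousLinearMap L).hasFDerivAt.comp_hasDerivAt t hc

theorem LinearMap.hasDerivAt_of_bilinear [FiniteDimensional 𝕜 F] (B : E →ₗ[𝕜] F →ₗ[𝕜] G)
    {u : 𝕜 → E} {v : 𝕜 → F} {u' : E} {v' : F}
    (hu : HasDerivAt u u' t) (hv : HasDerivAt v v' t) :
    HasDerivAt (fun s => B (u s) (v s)) (B (u t) v' + B u' (v t)) t :=
  (LinearMap.toContinuousLinearMap (LinearMap.toContinuousLinearMap.toLinearMap ∘ₗ B)
    ).hasDerivAt_of_bilinear (fun _ => hu) (fun _ => hv)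

theorem hasDerivAt_apply_of_forall_hasDerivAt {φ : 𝕜 → E →ₗ[𝕜] F} {φ' : E →ₗ[𝕜] F}
    {c : 𝕜 → E} {c' : E} (hφ : ∀ X, HasDerivAt (fun s => φ s X) (φ' X) t)
    (hc : HasDerivAt c c' t) :
    HasDerivAt (fun s => φ s (c s)) (φ' (c t) + φ t c') t := by
  let b := Module.finBasis 𝕜 E
  have expand (L : E →ₗ[𝕜] F) (x : E) : L x = ∑ i, b.repr x i • L (b i) := by
    conv_lhs => rw [← b.sum_repr x]
    simp only [map_sum, map_smul]
  have hsum := HasDerivAt.fun_sum (u := Finset.univ) fun i _ =>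
    ((hc.linearMap_apply (b.coord i)).smul (hφ (b i)))
  convert hsum using 1
  · exact funext fun s => expand (φ s) (c s)
  · simp only [Finset.sum_add_distrib, Module.Basis.coord_apply, ← expand]

end FiniteDimensional

section Matrix

variable {𝕜 : Type*} [NontriviallyNormedField 𝕜] {l m n : Type*} [Fintype l] [Fintype m]
  [Fintype n] {t : 𝕜}

theorem HasDerivAt.matrix_mul [CompleteSpace 𝕜] {A : 𝕜 → Matrix l m 𝕜} {B : 𝕜 → Matrix m n 𝕜}
    {A' : Matrix l m 𝕜} {B' : Matrix m n 𝕜} (hA : HasDerivAt A A' t) (hB : HasDerivAt B B' t) :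
    HasDerivAt (fun s => A s * B s) (A' * B t + A t * B') t := by
  rw [add_comm]
  exact (LinearMap.mk₂ 𝕜 (· * ·) Matrix.add_mul Matrix.smul_mul Matrix.mul_add
    fun c M N => Matrix.mul_smul M c N).hasDerivAt_of_bilinear hA hB

theorem HasDerivAt.matrix_inv [DecidableEq m] {γ : 𝕜 → Matrix m m 𝕜} {γ' : Matrix m m 𝕜}
    (hγ : HasDerivAt γ γ' t) (ht : IsUnit (γ t)) :
    HasDerivAt (fun s => (γ s)⁻¹) (-((γ t)⁻¹ * γ' * (γ t)⁻¹)) t := by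
  have hdet : (γ t).det ≠ 0 := ((Matrix.isUnit_iff_isUnit_det _).1 ht).ne_zero
  have hdet_cont : ContinuousAt (fun s => (γ s).det) t :=
    (continuous_id.matrix_det).continuousAt.comp hγ.continuousAt
  have hinv_cont : ContinuousAt (fun s => (γ s)⁻¹) t := by
    refine (continuousAt_matrix_inv (γ t) ?_).comp hγ.continuousAt
    simpa [Ring.inverse_eq_inv'] using continuousAt_inv₀ hdet
  have hlim : Tendsto (fun s => -((γ s)⁻¹ * slope γ t s * (γ t)⁻¹)) (𝓝[≠] t)
      (𝓝 (-((γ t)⁻¹ * γ' * (γ t)⁻¹))) :=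
    (((hinv_cont.tendsto.mono_left nhdsWithin_le_nhds).mul
      (hasDerivAt_iff_tendsto_slope.1 hγ)).mul_const _).neg
  refine hasDerivAt_iff_tendsto_slope.2 (hlim.congr' ?_)
  filter_upwards [nhdsWithin_le_nhds (hdet_cont.eventually_ne hdet)] with s hs_ne
  have hs : IsUnit (γ s).det := isUnit_iff_ne_zero.2 hs_ne
  rw [slope_def_module, slope_def_module, Matrix.mul_smul, Matrix.smul_mul, ← smul_neg]
  congr 1
  rw [Matrix.mul_sub, Matrix.sub_mul, Matrix.nonsing_inv_mul _ hs, Matrix.mul_assoc,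
    Matrix.mul_nonsing_inv _ ((Matrix.isUnit_iff_isUnit_det _).1 ht), Matrix.mul_one,
    Matrix.one_mul, neg_sub]

end Matrix

section HorizontalCurve

variable {𝕜 : Type*} [NontriviallyNormedField 𝕜] {m : Type*} [Fintype m] [DecidableEq m]
  {γ u : 𝕜 → Matrix m m 𝕜} {t : 𝕜}

theorem HasDerivAt.matrix_inv_of_horizontal (hγ : HasDerivAt γ (γ t * u t) t)
    (ht : IsUnit (γ t)) : HasDerivAt (fun s => (γ s)⁻¹) (-(u t * (γ t)⁻¹)) t := by
  convert hγ.matrix_inv ht using 2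
  rw [← Matrix.mul_assoc, Matrix.nonsing_inv_mul _ ((Matrix.isUnit_iff_isUnit_det _).1 ht),
    Matrix.one_mul]

variable [CompleteSpace 𝕜]

theorem HasDerivAt.mul_mul_inv_of_horizontal (hγ : HasDerivAt γ (γ t * u t) t)
    (ht : IsUnit (γ t)) (X : Matrix m m 𝕜) :
    HasDerivAt (fun s => γ s * X * (γ s)⁻¹) (γ t * (u t * X - X * u t) * (γ t)⁻¹) t := by
  convert (hγ.matrix_mul (hasDerivAt_const t X)).matrix_mul (hγ.matrix_inv_of_horizontal ht)
    using 1
  noncomm_ring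

theorem HasDerivAt.inv_mul_mul_of_horizontal (hγ : HasDerivAt γ (γ t * u t) t)
    (ht : IsUnit (γ t)) (X : Matrix m m 𝕜) :
    HasDerivAt (fun s => (γ s)⁻¹ * X * γ s)
      ((γ t)⁻¹ * X * γ t * u t - u t * ((γ t)⁻¹ * X * γ t)) t := by
  convert ((hγ.matrix_inv_of_horizontal ht).matrix_mul (hasDerivAt_const t X)).matrix_mul hγ
    using 1
  noncomm_ring

end HorizontalCurve

section Trivialization

variable {𝕜 : Type*} [NontriviallyNormedField 𝕜] {m : Type*} [Fintype m] [DecidableEq m]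
  {F : Type*} [NormedAddCommGroup F] [NormedSpace 𝕜 F]

/-- The paper's `ρ`. -/
def rightTrivialization (γ : 𝕜 → Matrix m m 𝕜) (lam : 𝕜 → Matrix m m 𝕜 →ₗ[𝕜] F) (t : 𝕜) :
    Matrix m m 𝕜 →ₗ[𝕜] F :=
  (lam t).comp (LinearMap.mulRight 𝕜 (γ t))

/-- The paper's `η`. -/
def leftTrivialization (γ : 𝕜 → Matrix m m 𝕜) (lam : 𝕜 → Matrix m m 𝕜 →ₗ[𝕜] F) (t : 𝕜) :
    Matrix m m 𝕜 →ₗ[𝕜] F :=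
  (lam t).comp (LinearMap.mulLeft 𝕜 (γ t))

variable [CompleteSpace 𝕜] {γ u : 𝕜 → Matrix m m 𝕜} {lam : 𝕜 → Matrix m m 𝕜 →ₗ[𝕜] F}

theorem hasDerivAt_leftTrivialization_of_rightTrivialization_const
    (hγ : ∀ t, HasDerivAt γ (γ t * u t) t) (hunit : ∀ t, IsUnit (γ t))
    (hρ : ∀ s t X, rightTrivialization γ lam s X = rightTrivialization γ lam t X)
    (t : 𝕜) (X : Matrix m m 𝕜) :
    HasDerivAt (fun s => leftTrivialization γ lam s X)
      (leftTrivialization γ lam t (u t * X - X * u t)) t := by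
  have hdet (s : 𝕜) : IsUnit (γ s).det := (Matrix.isUnit_iff_isUnit_det _).1 (hunit s)
  have hconj : (fun s => leftTrivialization γ lam s X) =
      fun s => rightTrivialization γ lam t (γ s * X * (γ s)⁻¹) := by
    funext s
    rw [← hρ s t]
    simp only [leftTrivialization, rightTrivialization, LinearMap.comp_apply,
      LinearMap.mulLeft_apply, LinearMap.mulRight_apply, Matrix.mul_assoc,
      Matrix.nonsing_inv_mul _ (hdet s), Matrix.mul_one]
  rw [hconj]
  refine (((hγ t).mul_mul_inv_of_horizontal (hunit t) X).linearMap_apply _).congr_deriv ?_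
  simp only [leftTrivialization, rightTrivialization, LinearMap.comp_apply,
    LinearMap.mulLeft_apply, LinearMap.mulRight_apply, Matrix.mul_assoc,
    Matrix.nonsing_inv_mul _ (hdet t), Matrix.mul_one]

end Trivialization

section AdjointEquation

variable {𝕜 : Type*} [RCLike 𝕜] {m : Type*} [Fintype m] [DecidableEq m]
  {F : Type*} [NormedAddCommGroup F] [NormedSpace 𝕜 F]
  {γ u : 𝕜 → Matrix m m 𝕜} {lam : 𝕜 → Matrix m m 𝕜 →ₗ[𝕜] F}

theorem rightTrivialization_const_of_hasDerivAt_leftTrivialization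
    (hγ : ∀ t, HasDerivAt γ (γ t * u t) t) (hunit : ∀ t, IsUnit (γ t))
    (hη : ∀ t X, HasDerivAt (fun s => leftTrivialization γ lam s X)
      (leftTrivialization γ lam t (u t * X - X * u t)) t)
    (s t : 𝕜) (X : Matrix m m 𝕜) :
    rightTrivialization γ lam s X = rightTrivialization γ lam t X := by
  have hconj : (fun r => rightTrivialization γ lam r X) =
      fun r => leftTrivialization γ lam r ((γ r)⁻¹ * X * γ r) := by
    funext r
    simp only [leftTrivialization, rightTrivialization, LinearMap.comp_apply,
      LinearMap.mulLeft_apply, LinearMap.mulRight_apply, ← Matrix.mul_assoc,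
      Matrix.mul_nonsing_inv _ ((Matrix.isUnit_iff_isUnit_det _).1 (hunit r)), Matrix.one_mul]
  have hderiv (r : 𝕜) : HasDerivAt (fun τ => rightTrivialization γ lam τ X) 0 r := by
    rw [hconj]
    refine (hasDerivAt_apply_of_forall_hasDerivAt
      (φ' := (leftTrivialization γ lam r).comp
        (LinearMap.mulLeft 𝕜 (u r) - LinearMap.mulRight 𝕜 (u r)))
      (hη r) ((hγ r).inv_mul_mul_of_horizontal (hunit r) X)).congr_deriv ?_
    simp only [LinearMap.comp_apply, LinearMap.sub_apply, LinearMap.mulLeft_apply,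
      LinearMap.mulRight_apply, ← map_add, sub_add_sub_cancel, sub_self, map_zero]
  exact is_const_of_deriv_eq_zero (fun r => (hderiv r).differentiableAt) (fun r => (hderiv r).deriv)
    s t

end AdjointEquation

theorem sard_left_right_trivialization_general (n : ℕ) (u γ : ℝ → Matrix (Fin n) (Fin n) ℝ)
    (hγinv : ∀ t : ℝ, IsUnit (γ t))
    (hγ' : ∀ t : ℝ, HasDerivAt γ (γ t * u t) t)
    (lam : ℝ → (Matrix (Fin n) (Fin n) ℝ →ₗ[ℝ] ℝ)) :
    (∀ s t : ℝ, ∀ X : Matrix (Fin n) (Fin n) ℝ, lam s (X * γ s) = lam t (X * γ t)) ↔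
      (∀ (t : ℝ) (X : Matrix (Fin n) (Fin n) ℝ),
        HasDerivAt (fun s : ℝ => lam s (γ s * X))
          (lam t (γ t * (u t * X - X * u t))) t) :=
  ⟨hasDerivAt_leftTrivialization_of_rightTrivialization_const hγ' hγinv,
    rightTrivialization_const_of_hasDerivAt_leftTrivialization hγ' hγinv⟩

/-- Equivalence of the right-invariant and left-invariant descriptions of a one-form along a
horizontal curve, in matrix coordinates: with `ρ(t)(X) = λ(t)(X·γ(t))` and
`η(t)(X) = λ(t)(γ(t)·X)`, the function `ρ` is constant in `t` if and only if `η` solves the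
adjoint equation `dη/dt = (ad_{u(t)})* η`. -/
theorem sard_left_right_trivialization (n : ℕ) (u γ : ℝ → Matrix (Fin n) (Fin n) ℝ)
    (hu : Continuous u) (hγinv : ∀ t : ℝ, IsUnit (γ t))
    (hγ' : ∀ t : ℝ, HasDerivAt γ (γ t * u t) t)
    (lam : ℝ → (Matrix (Fin n) (Fin n) ℝ →ₗ[ℝ] ℝ)) :
    (∀ s t : ℝ, ∀ X : Matrix (Fin n) (Fin n) ℝ, lam s (X * γ s) = lam t (X * γ t)) ↔
      (∀ (t : ℝ) (X : Matrix (Fin n) (Fin n) ℝ),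
        HasDerivAt (fun s : ℝ => lam s (γ s * X))
          (lam t (γ t * (u t * X - X * u t))) t) :=
  sard_left_right_trivialization_general n u γ hγinv hγ' lam
end

section
/- Let V be a finite-dimensional real vector space, W ⊆ V a subspace, and ξ a bivector (a grade-2 element of the exterior algebra ⋀V). Then ξ lies in ⋀²W if and only if for every pair of linear functionals f, g : V →ₗ[ℝ] ℝ with f vanishing on W, the evaluation of ξ against f∧g is zero; here the evaluation against f∧g is the unique linear functional on the grade-2 component of ⋀V sending ι(x)*ι(y) to f(x)·g(y) − f(y)·g(x). -/
/-!
Choose a retraction `r : V → W` and put `P = W.subtype ∘ r`. Then `⟨f ∧ g, ξ - ⋀²P ξ⟩` equals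
`⟨(f - f ∘ P) ∧ g, ξ⟩ - ⟨(g - g ∘ P) ∧ (f ∘ P), ξ⟩`, and `f - f ∘ P`, `g - g ∘ P` vanish on `W`.
So under the hypothesis `ξ - ⋀²P ξ` pairs to zero with every `f ∧ g`; these include the
coordinate functionals of a basis of `⋀²V`, hence `ξ = ⋀²P ξ` comes from `⋀²W`.
-/

open ExteriorAlgebra

noncomputable section

variable {V : Type*} [AddCommGroup V] [Module ℝ V]

/-- The wedge `x ∧ y` of two vectors, as an element of the second exterior power
`⋀²V` (the grade-2 component of the exterior algebra). -/
def sardWedge (x y : V) : ⋀[ℝ]^2 V :=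
  ⟨ι ℝ x * ι ℝ y, by
    show ι ℝ x * ι ℝ y ∈ LinearMap.range (ι ℝ : V →ₗ[ℝ] ExteriorAlgebra ℝ V) ^ 2
    rw [pow_two]
    exact Submodule.mul_mem_mul (LinearMap.mem_range_self _ x) (LinearMap.mem_range_self _ y)⟩

namespace exteriorPower

variable {R M N : Type*} [CommRing R] [AddCommGroup M] [Module R M] [AddCommGroup N] [Module R N]

theorem coe_ιMulti_two (x y : M) :
    (ιMulti R 2 ![x, y] : ExteriorAlgebra R M) = ι R x * ι R y := by
  simp [ExteriorAlgebra.ιMulti_apply]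

theorem map_ιMulti_two (P : M →ₗ[R] N) (x y : M) :
    map 2 P (ιMulti R 2 ![x, y]) = ιMulti R 2 ![P x, P y] := by
  rw [map_apply_ιMulti, ← FinVec.map_eq]
  rfl

theorem linearMap_ext_two {φ ψ : ⋀[R]^2 M →ₗ[R] N}
    (h : ∀ x y, φ (ιMulti R 2 ![x, y]) = ψ (ιMulti R 2 ![x, y])) : φ = ψ :=
  linearMap_ext <| AlternatingMap.ext fun v => by
    rw [← FinVec.etaExpand_eq v]
    exact h _ _

theorem pairingDual_ιMulti_two (f g : Module.Dual R M) (x y : M) :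
    pairingDual R M 2 (ιMulti R 2 ![f, g]) (ιMulti R 2 ![x, y]) = f x * g y - f y * g x := by
  simp [Matrix.det_fin_two, mul_comm]

theorem comap_subtype_span_ι_mul_ι (W : Submodule R M) :
    (Submodule.span R {z | ∃ w₁ ∈ W, ∃ w₂ ∈ W, z = ι R w₁ * ι R w₂}).comap (⋀[R]^2 M).subtype =
      LinearMap.range (map 2 W.subtype) := by
  apply le_antisymm
  · refine (Submodule.comap_mono ?_).trans
      (Submodule.comap_map_eq_of_injective (⋀[R]^2 M).injective_subtype _).le
    rw [Submodule.span_le]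
    rintro _ ⟨w₁, hw₁, w₂, hw₂, rfl⟩
    refine ⟨map 2 W.subtype (ιMulti R 2 ![⟨w₁, hw₁⟩, ⟨w₂, hw₂⟩]), LinearMap.mem_range_self _ _, ?_⟩
    rw [map_ιMulti_two, Submodule.subtype_apply, coe_ιMulti_two]
    rfl
  · rw [LinearMap.range_eq_map, Submodule.map_le_iff_le_comap, ← ιMulti_span, Submodule.span_le]
    rintro _ ⟨v, rfl⟩
    rw [show v = ![v 0, v 1] from (FinVec.etaExpand_eq v).symm, SetLike.mem_coe,
      Submodule.mem_comap, Submodule.mem_comap, map_ιMulti_two, Submodule.subtype_apply,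
      coe_ιMulti_two]
    exact Submodule.subset_span ⟨_, (v 0).2, _, (v 1).2, rfl⟩

theorem eq_zero_of_forall_pairingDual_ιMulti_eq_zero [Module.Free R M] {n : ℕ}
    {η : ⋀[R]^n M} (h : ∀ f : Fin n → Module.Dual R M, pairingDual R M n (ιMulti R n f) η = 0) :
    η = 0 := by
  classical
  let b := Module.Free.chooseBasis R M
  let : LinearOrder (Module.Free.ChooseBasisIndex R M) := linearOrderOfSTO WellOrderingRel
  refine (b.exteriorPower n).forall_coord_eq_zero_iff.mp fun s => ?_
  rw [basis_coord]
  exact h _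

theorem pairingDual_sub_pairingDual_map (P : M →ₗ[R] M) (f g : Module.Dual R M)
    (η : ⋀[R]^2 M) :
    pairingDual R M 2 (ιMulti R 2 ![f, g]) (η - map 2 P η) =
      pairingDual R M 2 (ιMulti R 2 ![f - f ∘ₗ P, g]) η -
        pairingDual R M 2 (ιMulti R 2 ![g - g ∘ₗ P, f ∘ₗ P]) η := by
  rw [map_sub, ← LinearMap.comp_apply, ← LinearMap.sub_apply, ← LinearMap.sub_apply]
  congr 1
  refine linearMap_ext_two fun x y => ?_
  simp only [LinearMap.sub_apply, LinearMap.comp_apply, map_ιMulti_two,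
    pairingDual_ιMulti_two]
  ring

theorem comp_map_subtype_eq_zero {W : Submodule R M} {f g : Module.Dual R M}
    (hf : ∀ w ∈ W, f w = 0) {φ : ⋀[R]^2 M →ₗ[R] R}
    (hφ : ∀ x y, φ (ιMulti R 2 ![x, y]) = f x * g y - f y * g x) :
    φ ∘ₗ map 2 W.subtype = 0 :=
  linearMap_ext_two fun x y => by
    simp only [LinearMap.comp_apply, map_ιMulti_two, Submodule.coe_subtype, hφ, hf x x.2,
      hf y y.2, zero_mul, sub_zero, LinearMap.zero_apply]

theorem mem_range_map_subtype_of_forall_pairingDual_eq_zero {K E : Type*} [Field K]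
    [AddCommGroup E] [Module K E] (W : Submodule K E) {η : ⋀[K]^2 E}
    (h : ∀ f g : Module.Dual K E, (∀ w ∈ W, f w = 0) →
      pairingDual K E 2 (ιMulti K 2 ![f, g]) η = 0) :
    η ∈ LinearMap.range (map 2 W.subtype) := by
  obtain ⟨r, hr⟩ := W.subtype.exists_leftInverse_of_injective W.ker_subtype
  set P := W.subtype ∘ₗ r
  have hP : ∀ w ∈ W, P w = w := fun w hw =>
    congrArg Subtype.val (LinearMap.congr_fun hr ⟨w, hw⟩)
  have hη : η = map 2 P η := by
    rw [← sub_eq_zero]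
    refine eq_zero_of_forall_pairingDual_ιMulti_eq_zero fun fg => ?_
    rw [show fg = ![fg 0, fg 1] from (FinVec.etaExpand_eq fg).symm,
      pairingDual_sub_pairingDual_map, h _ _ fun w hw => by simp [hP w hw],
      h _ _ fun w hw => by simp [hP w hw], sub_zero]
  rw [hη, map_comp]
  exact LinearMap.mem_range_self _ _

end exteriorPower

theorem sard_bivector_support_general (V : Type*) [AddCommGroup V] [Module ℝ V]
    (W : Submodule ℝ V)
    (ξ : ExteriorAlgebra ℝ V) (hξ : ξ ∈ ⋀[ℝ]^2 V) :
    ξ ∈ Submodule.span ℝ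
        {z : ExteriorAlgebra ℝ V | ∃ w₁ ∈ W, ∃ w₂ ∈ W, z = ι ℝ w₁ * ι ℝ w₂} ↔
      ∀ f g : V →ₗ[ℝ] ℝ, (∀ w ∈ W, f w = 0) →
        ∀ φ : ↥(⋀[ℝ]^2 V) →ₗ[ℝ] ℝ,
          (∀ x y : V, φ (sardWedge x y) = f x * g y - f y * g x) →
          φ ⟨ξ, hξ⟩ = 0 := by
  have hwedge (x y : V) : sardWedge x y = exteriorPower.ιMulti ℝ 2 ![x, y] :=
    Subtype.ext (exteriorPower.coe_ιMulti_two x y).symm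
  refine (SetLike.ext_iff.mp (exteriorPower.comap_subtype_span_ι_mul_ι W) ⟨ξ, hξ⟩).trans ?_
  simp only [hwedge]
  constructor
  · rintro ⟨θ, hθ⟩ f g hf φ hφ
    rw [← hθ]
    exact LinearMap.congr_fun (exteriorPower.comp_map_subtype_eq_zero hf hφ) θ
  · exact fun H => exteriorPower.mem_range_map_subtype_of_forall_pairingDual_eq_zero W
      fun f g hf => H f g hf _ (exteriorPower.pairingDual_ιMulti_two f g)

/-- A bivector `ξ` lies in `⋀²W` (the submodule spanned by products `ι w₁ * ι w₂` with
`w₁, w₂ ∈ W`) if and only if for all linear functionals `f, g` on `V` with `f` vanishing on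
`W`, the evaluation of `ξ` against `f ∧ g` — i.e. the unique linear functional on the grade-2
component sending `ι x * ι y` to `f(x)·g(y) − f(y)·g(x)` — vanishes on `ξ`. -/
theorem sard_bivector_support (V : Type*) [AddCommGroup V] [Module ℝ V]
    [FiniteDimensional ℝ V] (W : Submodule ℝ V)
    (ξ : ExteriorAlgebra ℝ V) (hξ : ξ ∈ ⋀[ℝ]^2 V) :
    ξ ∈ Submodule.span ℝ
        {z : ExteriorAlgebra ℝ V | ∃ w₁ ∈ W, ∃ w₂ ∈ W, z = ι ℝ w₁ * ι ℝ w₂} ↔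
      ∀ f g : V →ₗ[ℝ] ℝ, (∀ w ∈ W, f w = 0) →
        ∀ φ : ↥(⋀[ℝ]^2 V) →ₗ[ℝ] ℝ,
          (∀ x y : V, φ (sardWedge x y) = f x * g y - f y * g x) →
          φ ⟨ξ, hξ⟩ = 0 :=
  sard_bivector_support_general V W ξ hξ

end
end

section
/- Let V be a finite-dimensional real vector space, let ξ be a bivector (a grade-2 element of the exterior algebra ⋀V), and let m ∈ ℕ. Then ξ^(m+1) = 0 in ⋀V if and only if there exists a subspace W ⊆ V with finrank W ≤ 2m such that ξ lies in ⋀²W. -/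
open ExteriorAlgebra

/-!
Linear Darboux theorem: every `ξ ∈ ⋀²V` can be written as `ξ = ∑_{i<r} eᵢ ∧ fᵢ` with
`e₁, f₁, …, e_r, f_r` linearly independent. The summands `eᵢ ∧ fᵢ` commute and square to zero,
so `ξ^r = r! • e₁ ∧ f₁ ∧ ⋯ ∧ e_r ∧ f_r ≠ 0` while `ξ^(r+1) = 0`; hence `ξ^(m+1) = 0` forces
`r ≤ m`, and `ξ` lies in `⋀²` of the `2r`-dimensional span of the `eᵢ, fᵢ`. Conversely, if
`ξ ∈ ⋀²W` then `ξ^(m+1) ∈ ⋀^(2m+2) W`, which vanishes once `dim W ≤ 2m`.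
-/

section SquareZero

variable {A : Type*} [Semiring A]

theorem Commute.add_pow_succ_of_mul_self_eq_zero {a b : A} (h : Commute a b) (ha : a * a = 0)
    (n : ℕ) : (a + b) ^ (n + 1) = b ^ (n + 1) + (n + 1) • (a * b ^ n) := by
  induction n with
  | zero => simp [add_comm]
  | succ n ih =>
    have hba : b ^ (n + 1) * a = a * b ^ (n + 1) := (h.pow_right (n + 1)).eq.symm
    have haba : a * b ^ n * a = 0 := by
      rw [mul_assoc, ← (h.pow_right n).eq, ← mul_assoc, ha, zero_mul]
    rw [pow_succ, ih, add_mul, mul_add, mul_add, hba, smul_mul_assoc, smul_mul_assoc, haba,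
      smul_zero, zero_add, mul_assoc, ← pow_succ, ← pow_succ]
    module

theorem List.sum_pow_length_succ_eq_zero {l : List A} (hc : l.Pairwise Commute)
    (hsq : ∀ a ∈ l, a * a = 0) : l.sum ^ (l.length + 1) = 0 := by
  induction l with
  | nil => simp
  | cons a t ih =>
    obtain ⟨hat, ht⟩ := List.pairwise_cons.mp hc
    have ht0 := ih ht fun x hx => hsq x (List.mem_cons_of_mem a hx)
    rw [List.sum_cons, List.length_cons,
      (Commute.list_sum_right _ _ hat).add_pow_succ_of_mul_self_eq_zero (hsq a List.mem_cons_self),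
      pow_succ, ht0, zero_mul, mul_zero, smul_zero, add_zero]

theorem List.sum_pow_length_eq_factorial_smul_prod {l : List A} (hc : l.Pairwise Commute)
    (hsq : ∀ a ∈ l, a * a = 0) : l.sum ^ l.length = l.length.factorial • l.prod := by
  induction l with
  | nil => simp
  | cons a t ih =>
    obtain ⟨hat, ht⟩ := List.pairwise_cons.mp hc
    have htsq : ∀ x ∈ t, x * x = 0 := fun x hx => hsq x (List.mem_cons_of_mem a hx)
    rw [List.sum_cons, List.length_cons,
      (Commute.list_sum_right _ _ hat).add_pow_succ_of_mul_self_eq_zero (hsq a List.mem_cons_self),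
      List.sum_pow_length_succ_eq_zero ht htsq, ih ht htsq, zero_add, mul_smul_comm, smul_smul,
      List.prod_cons, Nat.factorial_succ]

end SquareZero

section LinearAlgebra

variable {K V : Type*} [DivisionRing K] [AddCommGroup V] [Module K V]

theorem List.linearIndependent_get_cons {a : V} {l : List V} (hl : LinearIndependent K l.get)
    (ha : a ∉ Submodule.span K {v | v ∈ l}) : LinearIndependent K (a :: l).get := by
  have hget : (a :: l).get = Fin.cons a l.get := by
    funext i
    refine Fin.cases rfl (fun j => ?_) i
    simp
  rw [hget]
  exact hl.finCons (by rwa [Set.range_list_get])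

theorem Submodule.exists_le_span_singleton_sup_eq {W : Submodule K V} {v : V} (hv : v ∈ W)
    (hv0 : v ≠ 0) : ∃ U ≤ W, v ∉ U ∧ (K ∙ v) ⊔ U = W := by
  obtain ⟨C, hC⟩ := (K ∙ v).exists_isCompl
  refine ⟨C ⊓ W, inf_le_right, fun hvC => hv0 ?_, ?_⟩
  · have : v ∈ (K ∙ v) ⊓ C := ⟨Submodule.mem_span_singleton_self v, hvC.1⟩
    rwa [hC.inf_eq_bot, Submodule.mem_bot] at this
  · rw [← sup_inf_assoc_of_le C ((Submodule.span_singleton_le_iff_mem v W).mpr hv),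
      hC.sup_eq_top, top_inf_eq]

theorem linearIndependent_flatMap_cons {U : Submodule K V} {L : List (V × V)} {e f : V}
    (hLU : ∀ p ∈ L, p.1 ∈ U ∧ p.2 ∈ U)
    (hL : LinearIndependent K (L.flatMap fun p => [p.1, p.2]).get)
    (hf : f ∉ U) (he : e ∉ (K ∙ f) ⊔ U) :
    LinearIndependent K (((e, f) :: L).flatMap fun p => [p.1, p.2]).get := by
  have hspan : Submodule.span K {v | v ∈ L.flatMap fun p => [p.1, p.2]} ≤ U := by
    rw [Submodule.span_le]
    intro v hv
    obtain ⟨p, hp, hv⟩ := List.mem_flatMap.mp hv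
    rcases List.mem_pair.mp hv with rfl | rfl
    exacts [(hLU p hp).1, (hLU p hp).2]
  change LinearIndependent K (e :: f :: L.flatMap fun p => [p.1, p.2]).get
  refine List.linearIndependent_get_cons
    (List.linearIndependent_get_cons hL fun h => hf (hspan h)) fun h => he ?_
  refine Submodule.span_le.mpr ?_ h
  intro v hv
  rcases List.mem_cons.mp hv with rfl | hv
  exacts [Submodule.mem_sup_left (Submodule.mem_span_singleton_self v),
    Submodule.mem_sup_right (hspan (Submodule.subset_span hv))]

end LinearAlgebra

namespace ExteriorAlgebra

section CommRing

variable {R V : Type*} [CommRing R] [AddCommGroup V] [Module R V]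

variable (R) in
def bivectorSpan (W : Submodule R V) : Submodule R (ExteriorAlgebra R V) :=
  Submodule.span R {z | ∃ w₁ ∈ W, ∃ w₂ ∈ W, z = ι R w₁ * ι R w₂}

theorem bivectorSpan_eq_sq (W : Submodule R V) : bivectorSpan R W = W.map (ι R) ^ 2 := by
  rw [sq, Submodule.mul_eq_span_mul_set, bivectorSpan]
  congr 1
  ext z
  simp only [Set.mem_ofPred_eq, Set.mem_mul, SetLike.mem_coe, Submodule.mem_map]
  constructor
  · rintro ⟨w₁, hw₁, w₂, hw₂, rfl⟩
    exact ⟨_, ⟨w₁, hw₁, rfl⟩, _, ⟨w₂, hw₂, rfl⟩, rfl⟩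
  · rintro ⟨_, ⟨w₁, hw₁, rfl⟩, _, ⟨w₂, hw₂, rfl⟩, rfl⟩
    exact ⟨w₁, hw₁, w₂, hw₂, rfl⟩

theorem exteriorPower_two_eq_bivectorSpan_top :
    ⋀[R]^2 V = bivectorSpan R (⊤ : Submodule R V) := by
  rw [bivectorSpan_eq_sq, ← LinearMap.range_eq_map]

theorem bivectorSpan_bot : bivectorSpan R (⊥ : Submodule R V) = ⊥ := by
  rw [bivectorSpan_eq_sq, Submodule.map_bot, sq, Submodule.bot_mul]

theorem ι_mul_ι_comm (a b : V) : ι R a * ι R b = -(ι R b * ι R a) :=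
  eq_neg_of_add_eq_zero_left (ι_add_mul_swap a b)

theorem commute_ι_ι_mul (a b c : V) : Commute (ι R a) (ι R b * ι R c) := by
  rw [Commute, SemiconjBy, ← mul_assoc, ι_mul_ι_comm a b, neg_mul, mul_assoc, ι_mul_ι_comm a c,
    mul_neg, neg_neg, mul_assoc]

theorem commute_ι_mul_ι (a b c d : V) : Commute (ι R a * ι R b) (ι R c * ι R d) :=
  (commute_ι_ι_mul a c d).mul_left (commute_ι_ι_mul b c d)

theorem ι_mul_ι_mul_self (a b : V) : ι R a * ι R b * (ι R a * ι R b) = 0 := by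
  rw [mul_assoc, (commute_ι_ι_mul b a b).eq, ← mul_assoc, ← mul_assoc, ι_sq_zero, zero_mul,
    zero_mul]

theorem list_prod_map_ι (l : List V) : (l.map (ι R)).prod = ιMulti R l.length l.get := by
  rw [ιMulti_apply]
  conv_lhs => rw [← List.ofFn_get l, List.map_ofFn]
  rfl

theorem list_prod_map_ι_mul_ι (L : List (V × V)) :
    (L.map fun p => ι R p.1 * ι R p.2).prod = ((L.flatMap fun p => [p.1, p.2]).map (ι R)).prod := by
  induction L with
  | nil => rfl
  | cons p L ih => simp [ih, mul_assoc]

theorem exists_eq_ι_mul_add_of_mem_bivectorSpan {U W : Submodule R V} {v : V}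
    (hW : (R ∙ v) ⊔ U = W) {ξ : ExteriorAlgebra R V} (hξ : ξ ∈ bivectorSpan R W) :
    ∃ x ∈ U, ∃ ψ ∈ bivectorSpan R U, ξ = ι R v * ι R x + ψ := by
  suffices bivectorSpan R W ≤ U.map (LinearMap.mulLeft R (ι R v) ∘ₗ ι R) ⊔ bivectorSpan R U by
    obtain ⟨_, ⟨x, hx, rfl⟩, ψ, hψ, rfl⟩ := Submodule.mem_sup.mp (this hξ)
    exact ⟨x, hx, ψ, hψ, rfl⟩
  rw [bivectorSpan, Submodule.span_le]
  rintro _ ⟨w₁, hw₁, w₂, hw₂, rfl⟩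
  rw [← hW] at hw₁ hw₂
  obtain ⟨_, hc₁, u₁, hu₁, rfl⟩ := Submodule.mem_sup.mp hw₁
  obtain ⟨_, hc₂, u₂, hu₂, rfl⟩ := Submodule.mem_sup.mp hw₂
  obtain ⟨c₁, rfl⟩ := Submodule.mem_span_singleton.mp hc₁
  obtain ⟨c₂, rfl⟩ := Submodule.mem_span_singleton.mp hc₂
  have hexpand : ι R (c₁ • v + u₁) * ι R (c₂ • v + u₂) =
      ι R v * ι R (c₁ • u₂ - c₂ • u₁) + ι R u₁ * ι R u₂ := by
    simp only [map_add, map_smul, map_sub, add_mul, mul_add, smul_mul_assoc, mul_smul_comm,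
      mul_sub, ι_sq_zero, ι_mul_ι_comm u₁ v]
    module
  rw [SetLike.mem_coe, hexpand]
  exact Submodule.add_mem_sup ⟨_, sub_mem (U.smul_mem c₁ hu₂) (U.smul_mem c₂ hu₁), rfl⟩
    (Submodule.subset_span ⟨u₁, hu₁, u₂, hu₂, rfl⟩)

theorem sum_pairs_mem_bivectorSpan (L : List (V × V)) :
    (L.map fun p => ι R p.1 * ι R p.2).sum ∈
      bivectorSpan R (Submodule.span R {v | v ∈ L.flatMap fun p => [p.1, p.2]}) := by
  refine list_sum_mem fun z hz => ?_
  obtain ⟨p, hp, rfl⟩ := List.mem_map.mp hz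
  exact Submodule.subset_span ⟨p.1, Submodule.subset_span (List.mem_flatMap.mpr ⟨p, hp, by simp⟩),
    p.2, Submodule.subset_span (List.mem_flatMap.mpr ⟨p, hp, by simp⟩), rfl⟩

end CommRing

section Field

variable {K V : Type*} [Field K] [AddCommGroup V] [Module K V]

theorem map_ι_pow_eq_bot (W : Submodule K V) [FiniteDimensional K W] {n : ℕ}
    (hn : Module.finrank K W < n) : W.map (ι K) ^ n = ⊥ := by
  have hW : W.map (ι K) = ((⊤ : Submodule K W).map (ι K)).map (map W.subtype).toLinearMap := by
    rw [← Submodule.map_comp, map_comp_ι, Submodule.map_comp, Submodule.map_subtype_top]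
  have hbot : ⋀[K]^n W = ⊥ := by
    rw [← Submodule.finrank_eq_zero, exteriorPower.finrank_eq, Nat.choose_eq_zero_of_lt hn]
  rw [hW, ← LinearMap.range_eq_map, ← Submodule.map_pow]
  change Submodule.map _ (⋀[K]^n W) = ⊥
  rw [hbot, Submodule.map_bot]

theorem pow_succ_eq_zero_of_mem_bivectorSpan {W : Submodule K V} [FiniteDimensional K W]
    {m : ℕ} (hW : Module.finrank K W ≤ 2 * m) {ξ : ExteriorAlgebra K V}
    (hξ : ξ ∈ bivectorSpan K W) : ξ ^ (m + 1) = 0 := by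
  rw [bivectorSpan_eq_sq] at hξ
  have hpow := Submodule.pow_mem_pow _ hξ (m + 1)
  rwa [← pow_mul, map_ι_pow_eq_bot W (by omega), Submodule.mem_bot] at hpow

theorem exists_darboux_pairs_of_mem_bivectorSpan (W : Submodule K V) [FiniteDimensional K W]
    {ξ : ExteriorAlgebra K V} (hξ : ξ ∈ bivectorSpan K W) :
    ∃ L : List (V × V), (∀ p ∈ L, p.1 ∈ W ∧ p.2 ∈ W) ∧
      LinearIndependent K (L.flatMap fun p => [p.1, p.2]).get ∧
      ξ = (L.map fun p => ι K p.1 * ι K p.2).sum := by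
  induction hd : Module.finrank K W using Nat.strong_induction_on generalizing W ξ with
  | _ d ih =>
  rcases eq_or_ne W ⊥ with rfl | hW
  · rw [bivectorSpan_bot, Submodule.mem_bot] at hξ
    exact ⟨[], by simp, linearIndependent_empty_type (ι := Fin 0), by simp [hξ]⟩
  obtain ⟨v, hvW, hv0⟩ := W.ne_bot_iff.mp hW
  obtain ⟨U, hUW, hvU, hvUW⟩ := Submodule.exists_le_span_singleton_sup_eq hvW hv0
  have := Submodule.finiteDimensional_of_le hUW
  have hUd : Module.finrank K U < d :=
    hd ▸ Submodule.finrank_lt_finrank_of_lt (lt_of_le_of_ne hUW (by rintro rfl; exact hvU hvW))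
  obtain ⟨x, hxU, ψ, hψ, rfl⟩ := exists_eq_ι_mul_add_of_mem_bivectorSpan hvUW hξ
  rcases eq_or_ne x 0 with rfl | hx0
  · obtain ⟨L, hLU, hL, rfl⟩ := ih _ hUd U hψ rfl
    exact ⟨L, fun p hp => ⟨hUW (hLU p hp).1, hUW (hLU p hp).2⟩, hL, by simp⟩
  -- Splitting off `x` as well gives `ξ = v ∧ x + x ∧ y + ψ' = (v - y) ∧ x + ψ'`.
  obtain ⟨U', hU'U, hxU', hxU'U⟩ := Submodule.exists_le_span_singleton_sup_eq hxU hx0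
  have := Submodule.finiteDimensional_of_le hU'U
  have hU'd : Module.finrank K U' < d := (Submodule.finrank_mono hU'U).trans_lt hUd
  obtain ⟨y, hyU', ψ', hψ', rfl⟩ := exists_eq_ι_mul_add_of_mem_bivectorSpan hxU'U hψ
  obtain ⟨L, hLU', hL, rfl⟩ := ih _ hU'd U' hψ' rfl
  have hU'W : U' ≤ W := hU'U.trans hUW
  refine ⟨(v - y, x) :: L, ?_, ?_, ?_⟩
  · refine List.forall_mem_cons.mpr ⟨⟨W.sub_mem hvW (hU'W hyU'), hUW hxU⟩, fun p hp => ?_⟩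
    exact ⟨hU'W (hLU' p hp).1, hU'W (hLU' p hp).2⟩
  · refine linearIndependent_flatMap_cons hLU' hL hxU' fun h => hvU ?_
    rw [hxU'U] at h
    simpa using U.add_mem h (hU'U hyU')
  · rw [List.map_cons, List.sum_cons, map_sub, sub_mul, ι_mul_ι_comm y x]
    abel

theorem ιMulti_ne_zero_of_linearIndependent {n : ℕ} {v : Fin n → V}
    (hv : LinearIndependent K v) : ιMulti K n v ≠ 0 := by
  have h := (exteriorPower.ιMulti_family_linearIndependent_field (n := n) hv).ne_zero
    (Set.powersetCard.ofFinEmbEquiv (RelEmbedding.refl (α := Fin n) (· ≤ ·)))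
  rw [exteriorPower.ιMulti_family, Equiv.symm_apply_apply] at h
  simpa [← exteriorPower.ιMulti_apply_coe] using h

theorem sum_pairs_pow_length_ne_zero [CharZero K] {L : List (V × V)}
    (hL : LinearIndependent K (L.flatMap fun p => [p.1, p.2]).get) :
    (L.map fun p => ι K p.1 * ι K p.2).sum ^ L.length ≠ 0 := by
  have hpow := List.sum_pow_length_eq_factorial_smul_prod (l := L.map fun p => ι K p.1 * ι K p.2)
    (List.pairwise_map.mpr (List.pairwise_of_forall fun p q => commute_ι_mul_ι p.1 p.2 q.1 q.2))
    (List.forall_mem_map.mpr fun p _ => ι_mul_ι_mul_self p.1 p.2)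
  rw [List.length_map] at hpow
  rw [hpow, list_prod_map_ι_mul_ι, list_prod_map_ι, ← Nat.cast_smul_eq_nsmul K]
  exact smul_ne_zero (Nat.cast_ne_zero.mpr L.length.factorial_ne_zero)
    (ιMulti_ne_zero_of_linearIndependent hL)

end Field

end ExteriorAlgebra

/-- Characterization of the rank of a bivector by vanishing of wedge powers: a grade-2
element `ξ` of the exterior algebra satisfies `ξ^(m+1) = 0` if and only if `ξ` lies in
`⋀²W` (the submodule spanned by products `ι w₁ * ι w₂` with `w₁, w₂ ∈ W`) for some subspace
`W` of dimension at most `2m`. -/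
theorem sard_bivector_rank (V : Type*) [AddCommGroup V] [Module ℝ V]
    [FiniteDimensional ℝ V]
    (ξ : ExteriorAlgebra ℝ V) (hξ : ξ ∈ ⋀[ℝ]^2 V) (m : ℕ) :
    ξ ^ (m + 1) = 0 ↔
      ∃ W : Submodule ℝ V, Module.finrank ℝ W ≤ 2 * m ∧
        ξ ∈ Submodule.span ℝ
          {z : ExteriorAlgebra ℝ V | ∃ w₁ ∈ W, ∃ w₂ ∈ W, z = ι ℝ w₁ * ι ℝ w₂} := by
  refine ⟨fun hpow => ?_, fun ⟨W, hW, hξW⟩ => pow_succ_eq_zero_of_mem_bivectorSpan hW hξW⟩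
  rw [exteriorPower_two_eq_bivectorSpan_top] at hξ
  obtain ⟨L, -, hL, rfl⟩ := exists_darboux_pairs_of_mem_bivectorSpan ⊤ hξ
  have hLm : L.length ≤ m := by
    by_contra! hmL
    exact sum_pairs_pow_length_ne_zero hL (pow_eq_zero_of_le hmL hpow)
  refine ⟨_, ?_, sum_pairs_mem_bivectorSpan L⟩
  rw [← Set.range_list_get, finrank_span_eq_card hL, Fintype.card_fin]
  simp only [List.length_flatMap, List.length_cons, List.length_nil, List.map_const',
    List.sum_replicate, smul_eq_mul]
  omega
end

section
/- Let V be a real vector space with finrank V = 2s, s ≥ 1, let v ∈ V, and let ξ be a bivector (a grade-2 element of the exterior algebra ⋀V). Then the following are equivalent: (1) there exists a subspace W ⊆ V with finrank W ≤ 2s − 2 such that v ∈ W and ξ lies in ⋀²W; (2) ξ^s = 0 and ι(v) * ξ^(s−1) = 0 in ⋀V. -/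
open ExteriorAlgebra Module

namespace SardAux

variable {V : Type*} [AddCommGroup V] [Module ℝ V]

/-- The span of products of pairs of vectors from `W`. -/
def spanPairs (W : Submodule ℝ V) : Submodule ℝ (ExteriorAlgebra ℝ V) :=
  Submodule.span ℝ {z : ExteriorAlgebra ℝ V | ∃ w₁ ∈ W, ∃ w₂ ∈ W, z = ι ℝ w₁ * ι ℝ w₂}

lemma spanPairs_mono {W W' : Submodule ℝ V} (h : W ≤ W') : spanPairs W ≤ spanPairs W' :=
  Submodule.span_mono (fun z hz => by
    obtain ⟨a, ha, b, hb, rfl⟩ := hz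
    exact ⟨a, h ha, b, h hb, rfl⟩)

lemma mem_spanPairs {W : Submodule ℝ V} {a b : V} (ha : a ∈ W) (hb : b ∈ W) :
    ι ℝ a * ι ℝ b ∈ spanPairs W :=
  Submodule.subset_span ⟨a, ha, b, hb, rfl⟩

lemma ι_swap (x y : V) : ι ℝ x * ι ℝ y = -(ι ℝ y * ι ℝ x) := by
  rw [eq_neg_iff_add_eq_zero]
  exact ι_add_mul_swap x y

lemma ι_comm_pair (v z w : V) :
    ι ℝ v * (ι ℝ z * ι ℝ w) = (ι ℝ z * ι ℝ w) * ι ℝ v := by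
  rw [← mul_assoc, ι_swap v z, neg_mul, mul_assoc, ι_swap v w, mul_neg, neg_neg, ← mul_assoc]

lemma pair_comm (x y z w : V) :
    (ι ℝ x * ι ℝ y) * (ι ℝ z * ι ℝ w) = (ι ℝ z * ι ℝ w) * (ι ℝ x * ι ℝ y) := by
  rw [mul_assoc, ι_comm_pair y z w, ← mul_assoc, ι_comm_pair x z w, mul_assoc]

lemma commute_spanPairs {a b : V} {U : Submodule ℝ V} {η : ExteriorAlgebra ℝ V}
    (hη : η ∈ spanPairs U) : Commute (ι ℝ a * ι ℝ b) η := by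
  induction hη using Submodule.span_induction with
  | mem z hz =>
    obtain ⟨x, -, y, -, rfl⟩ := hz
    exact pair_comm a b x y
  | zero => exact Commute.zero_right _
  | add x y _ _ hx hy => exact hx.add_right hy
  | smul c x _ hx => exact hx.smul_right c

lemma pair_sq_zero (a b : V) : (ι ℝ a * ι ℝ b) * (ι ℝ a * ι ℝ b) = 0 := by
  calc (ι ℝ a * ι ℝ b) * (ι ℝ a * ι ℝ b) = ι ℝ a * ((ι ℝ b * ι ℝ a) * ι ℝ b) := by
        simp [mul_assoc]
    _ = ι ℝ a * (-(ι ℝ a * ι ℝ b) * ι ℝ b) := by rw [ι_swap b a]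
    _ = -(ι ℝ a * (ι ℝ a * (ι ℝ b * ι ℝ b))) := by simp [mul_assoc]
    _ = 0 := by rw [ι_sq_zero]; simp

/-- Products of `n` vectors from `W`. -/
def PSet (W : Submodule ℝ V) (n : ℕ) : Set (ExteriorAlgebra ℝ V) :=
  {z | ∃ f : Fin n → V, (∀ i, f i ∈ W) ∧ z = ιMulti ℝ n f}

lemma ιMulti_cons {n : ℕ} (x : V) (f : Fin n → V) :
    ιMulti ℝ (n + 1) (Fin.cons x f) = ι ℝ x * ιMulti ℝ n f := by
  rw [ιMulti_succ_apply]
  congr 1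

lemma mul_mem_span_PSet {W : Submodule ℝ V} {n : ℕ} {w : V} (hw : w ∈ W)
    {x : ExteriorAlgebra ℝ V} (hx : x ∈ Submodule.span ℝ (PSet W n)) :
    ι ℝ w * x ∈ Submodule.span ℝ (PSet W (n + 1)) := by
  have h : Submodule.span ℝ (PSet W n) ≤
      Submodule.comap (LinearMap.mulLeft ℝ (ι ℝ w)) (Submodule.span ℝ (PSet W (n + 1))) := by
    rw [Submodule.span_le]
    rintro z ⟨f, hf, rfl⟩
    refine Submodule.subset_span ⟨Fin.cons w f, ?_, ?_⟩
    · intro i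
      refine Fin.cases ?_ ?_ i
      · exact hw
      · exact fun j => hf j
    · rw [ιMulti_cons]
      rfl
  exact h hx

lemma pow_mem_span_PSet {W : Submodule ℝ V} {ξ : ExteriorAlgebra ℝ V}
    (hξ : ξ ∈ spanPairs W) (k : ℕ) :
    ξ ^ k ∈ Submodule.span ℝ (PSet W (2 * k)) := by
  induction k with
  | zero =>
    refine Submodule.subset_span ⟨fun i => 0, fun i => zero_mem _, ?_⟩
    rw [pow_zero, ιMulti_zero_apply]
  | succ k ih =>
    rw [pow_succ']
    have h : spanPairs W ≤ Submodule.comap (LinearMap.mulRight ℝ (ξ ^ k))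
        (Submodule.span ℝ (PSet W (2 * k + 1 + 1))) := by
      rw [spanPairs, Submodule.span_le]
      rintro z ⟨a, ha, b, hb, rfl⟩
      simp only [SetLike.mem_coe, Submodule.mem_comap, LinearMap.mulRight_apply]
      rw [mul_assoc]
      exact mul_mem_span_PSet ha (mul_mem_span_PSet hb ih)
    exact h hξ

lemma ιMulti_eq_zero_of_mem [FiniteDimensional ℝ V] {W : Submodule ℝ V} {n : ℕ}
    (hn : finrank ℝ W < n) {f : Fin n → V} (hf : ∀ i, f i ∈ W) : ιMulti ℝ n f = 0 := by
  refine AlternatingMap.map_linearDependent _ f fun hli => ?_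
  have hg : LinearIndependent ℝ (fun i => (⟨f i, hf i⟩ : W)) :=
    LinearIndependent.of_comp W.subtype hli
  have := hg.fintype_card_le_finrank
  simp only [Fintype.card_fin] at this
  omega

lemma span_PSet_eq_bot [FiniteDimensional ℝ V] {W : Submodule ℝ V} {n : ℕ}
    (hn : finrank ℝ W < n) : Submodule.span ℝ (PSet W n) = ⊥ := by
  rw [Submodule.span_eq_bot]
  rintro z ⟨f, hf, rfl⟩
  exact ιMulti_eq_zero_of_mem hn hf

lemma iota_eq : (ι ℝ : V →ₗ[ℝ] ExteriorAlgebra ℝ V) =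
    CliffordAlgebra.ι (0 : QuadraticForm ℝ V) := rfl

lemma contract_ιMulti_eq_zero (d : Module.Dual ℝ V) :
    ∀ {n : ℕ} (g : Fin n → V), (∀ i, d (g i) = 0) →
      CliffordAlgebra.contractLeft (Q := (0 : QuadraticForm ℝ V)) d (ιMulti ℝ n g) = 0 := by
  intro n
  induction n with
  | zero =>
    intro g _
    rw [ιMulti_zero_apply]
    exact CliffordAlgebra.contractLeft_one (Q := (0 : QuadraticForm ℝ V)) (d := d)
  | succ n ih =>
    intro g hg
    rw [ιMulti_succ_apply, iota_eq, CliffordAlgebra.contractLeft_ι_mul,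
      ih (Matrix.vecTail g) (fun i => hg i.succ), mul_zero, sub_zero, hg 0, zero_smul]

lemma ιMulti_ne_zero : ∀ {n : ℕ} {f : Fin n → V},
    LinearIndependent ℝ f → ιMulti ℝ n f ≠ 0 := by
  intro n
  induction n with
  | zero =>
    intro f _
    rw [ιMulti_zero_apply]
    exact one_ne_zero
  | succ n ih =>
    intro f hf h0
    have htail : LinearIndependent ℝ (Matrix.vecTail f) :=
      hf.comp Fin.succ (Fin.succ_injective n)
    have hf0 : f 0 ∉ Submodule.span ℝ (Set.range (Matrix.vecTail f)) := by
      have := hf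
      rw [← Fin.cons_self_tail f] at this
      exact (linearIndependent_fin_cons.mp this).2
    obtain ⟨d, hd0, hdbot⟩ :=
      Submodule.exists_dual_map_eq_bot_of_notMem (p := Submodule.span ℝ (Set.range (Matrix.vecTail f))) hf0 inferInstance
    have hdt : ∀ i, d (Matrix.vecTail f i) = 0 := by
      intro i
      have : Matrix.vecTail f i ∈ Submodule.span ℝ (Set.range (Matrix.vecTail f)) :=
        Submodule.subset_span (Set.mem_range_self i)
      have h' : d (Matrix.vecTail f i) ∈ (⊥ : Submodule ℝ ℝ) :=
        hdbot ▸ Submodule.mem_map_of_mem this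
      simpa using h'
    have hc : CliffordAlgebra.contractLeft (Q := (0 : QuadraticForm ℝ V)) d
        (ιMulti ℝ (n + 1) f) = d (f 0) • ιMulti ℝ n (Matrix.vecTail f) := by
      rw [ιMulti_succ_apply, iota_eq, CliffordAlgebra.contractLeft_ι_mul,
        contract_ιMulti_eq_zero d _ hdt, mul_zero, sub_zero]
    rw [h0, map_zero] at hc
    exact ih htail (by
      rcases smul_eq_zero.mp hc.symm with h | h
      · exact absurd h hd0
      · exact h)

lemma dec (u : V) (U' : Submodule ℝ V) {ξ : ExteriorAlgebra ℝ V}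
    (hξ : ξ ∈ spanPairs ((ℝ ∙ u) ⊔ U')) :
    ∃ w ∈ U', ∃ η ∈ spanPairs U', ξ = ι ℝ u * ι ℝ w + η := by
  set L : V →ₗ[ℝ] ExteriorAlgebra ℝ V := (LinearMap.mulLeft ℝ (ι ℝ u)).comp (ι ℝ) with hL
  have key : spanPairs ((ℝ ∙ u) ⊔ U') ≤ Submodule.map L U' ⊔ spanPairs U' := by
    rw [spanPairs, Submodule.span_le]
    rintro z ⟨a, ha, b, hb, rfl⟩
    obtain ⟨a₀, ha₀, a', ha', rfl⟩ := Submodule.mem_sup.mp ha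
    obtain ⟨b₀, hb₀, b', hb', rfl⟩ := Submodule.mem_sup.mp hb
    obtain ⟨α, rfl⟩ := Submodule.mem_span_singleton.mp ha₀
    obtain ⟨β, rfl⟩ := Submodule.mem_span_singleton.mp hb₀
    have expand : ι ℝ (α • u + a') * ι ℝ (β • u + b') =
        L (α • b' - β • a') + ι ℝ a' * ι ℝ b' := by
      have hswap := ι_swap a' u
      simp only [hL, LinearMap.comp_apply, LinearMap.mulLeft_apply, map_add, map_smul,
        map_sub, add_mul, mul_add, mul_sub, smul_mul_assoc, mul_smul_comm, smul_smul,
        ι_sq_zero, smul_zero, mul_zero]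
      rw [hswap]
      module
    rw [expand]
    exact Submodule.add_mem_sup (Submodule.mem_map_of_mem (sub_mem (U'.smul_mem _ hb')
      (U'.smul_mem _ ha'))) (mem_spanPairs ha' hb')
  obtain ⟨y, hy, η, hη, rfl⟩ := Submodule.mem_sup.mp (key hξ)
  obtain ⟨w, hw, rfl⟩ := hy
  exact ⟨w, hw, η, hη, rfl⟩

lemma split [FiniteDimensional ℝ V] {U : Submodule ℝ V} {u : V} (hu : u ∈ U) (hu0 : u ≠ 0) :
    ∃ U' : Submodule ℝ V, U' ≤ U ∧ (ℝ ∙ u) ⊔ U' = U ∧ u ∉ U' ∧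
      finrank ℝ U' + 1 = finrank ℝ U := by
  set u' : U := ⟨u, hu⟩ with hu'
  have hu'0 : u' ≠ 0 := by
    simp [hu', Submodule.mk_eq_zero, hu0]
  obtain ⟨q, hq⟩ := Submodule.exists_isCompl (ℝ ∙ u' : Submodule ℝ U)
  refine ⟨q.map U.subtype, Submodule.map_subtype_le _ _, ?_, ?_, ?_⟩
  · have h1 : (ℝ ∙ u) = Submodule.map U.subtype (ℝ ∙ u') := by
      rw [Submodule.map_span]
      simp [hu']
    rw [h1, ← Submodule.map_sup, hq.sup_eq_top, Submodule.map_subtype_top]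
  · rintro ⟨x, hx, hxu⟩
    have hxq : u' ∈ q := by
      have : x = u' := Subtype.ext hxu
      rwa [← this]
    have hxp : u' ∈ (ℝ ∙ u' : Submodule ℝ U) := Submodule.mem_span_singleton_self _
    have : u' ∈ (ℝ ∙ u' : Submodule ℝ U) ⊓ q := ⟨hxp, hxq⟩
    rw [hq.inf_eq_bot] at this
    exact hu'0 this
  · rw [Submodule.finrank_map_subtype_eq]
    have h2 := Submodule.finrank_add_eq_of_isCompl hq
    rw [finrank_span_singleton hu'0] at h2
    omega

lemma spanPairs_bot : spanPairs (⊥ : Submodule ℝ V) = ⊥ := by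
  rw [spanPairs, Submodule.span_eq_bot]
  rintro z ⟨a, ha, b, hb, rfl⟩
  rw [Submodule.mem_bot] at ha
  rw [ha, map_zero, zero_mul]

lemma result_zero (U : Submodule ℝ V) {ξ : ExteriorAlgebra ℝ V} (hξ0 : ξ = 0) :
    ∃ (r : ℕ) (f : Fin (2 * r) → V) (c : ℝ),
      LinearIndependent ℝ f ∧ (∀ i, f i ∈ U) ∧
      ξ ∈ spanPairs (Submodule.span ℝ (Set.range f)) ∧ c ≠ 0 ∧
      ξ ^ r = c • ιMulti ℝ (2 * r) f := by
  refine ⟨0, fun _ => 0, 1, show LinearIndependent ℝ (fun _ : Fin 0 => (0 : V)) from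
    linearIndependent_empty_type, fun i => zero_mem _,
    by rw [hξ0]; exact zero_mem _, one_ne_zero, ?_⟩
  rw [pow_zero, ιMulti_zero_apply, one_smul]

lemma main [FiniteDimensional ℝ V] :
    ∀ (n : ℕ) (U : Submodule ℝ V), finrank ℝ U ≤ n → ∀ ξ ∈ spanPairs U,
      ∃ (r : ℕ) (f : Fin (2 * r) → V) (c : ℝ),
        LinearIndependent ℝ f ∧ (∀ i, f i ∈ U) ∧
        ξ ∈ spanPairs (Submodule.span ℝ (Set.range f)) ∧ c ≠ 0 ∧
        ξ ^ r = c • ιMulti ℝ (2 * r) f := by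
  intro n
  induction n with
  | zero =>
    intro U hU ξ hξ
    have hUbot : U = ⊥ := Submodule.finrank_eq_zero.mp (Nat.le_zero.mp hU)
    rw [hUbot, spanPairs_bot, Submodule.mem_bot] at hξ
    exact result_zero U hξ
  | succ n ih =>
    intro U hU ξ hξ
    by_cases hU0 : finrank ℝ U = 0
    · have hUbot : U = ⊥ := Submodule.finrank_eq_zero.mp hU0
      rw [hUbot, spanPairs_bot, Submodule.mem_bot] at hξ
      exact result_zero U hξ
    · have hUne : U ≠ ⊥ := fun h => hU0 (by rw [h]; exact finrank_bot ℝ V)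
      obtain ⟨u, hu, hu0⟩ := Submodule.exists_mem_ne_zero_of_ne_bot hUne
      obtain ⟨U', hU'le, hsup, huU', hrank⟩ := split hu hu0
      have hξ' : ξ ∈ spanPairs ((ℝ ∙ u) ⊔ U') := by rw [hsup]; exact hξ
      obtain ⟨w, hw, η, hη, hdec⟩ := dec u U' hξ'
      by_cases hw0 : w = 0
      · have hξη : ξ = η := by rw [hdec, hw0, map_zero, mul_zero, zero_add]
        obtain ⟨r, f, c, h1, h2, h3, h4, h5⟩ := ih U' (by omega) η hη
        exact ⟨r, f, c, h1, fun i => hU'le (h2 i), hξη ▸ h3, h4, hξη ▸ h5⟩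
      · obtain ⟨U'', hU''le, hsup', hwU'', hrank'⟩ := split hw hw0
        have hη' : η ∈ spanPairs ((ℝ ∙ w) ⊔ U'') := by rw [hsup']; exact hη
        obtain ⟨t, ht, η'', hη'', hdec'⟩ := dec w U'' hη'
        obtain ⟨r, f, c, hf_li, hf_mem, hξmem, hc, hpow⟩ := ih U'' (by omega) η'' hη''
        set a := u - t with ha
        have hkey : ξ = ι ℝ a * ι ℝ w + η'' := by
          rw [hdec, hdec', ha, map_sub, sub_mul, ι_swap w t]
          abel
        have hrangef : Submodule.span ℝ (Set.range f) ≤ U'' :=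
          Submodule.span_le.mpr (by rintro x ⟨i, rfl⟩; exact hf_mem i)
        have hbW : w ∉ Submodule.span ℝ (Set.range f) := fun h => hwU'' (hrangef h)
        have hli1 : LinearIndependent ℝ (Fin.cons w f : Fin (2 * r + 1) → V) :=
          linearIndependent_fin_cons.mpr ⟨hf_li, hbW⟩
        have haW : a ∉ Submodule.span ℝ (Set.range (Fin.cons w f : Fin (2 * r + 1) → V)) := by
          intro hmem
          have hsub : Submodule.span ℝ (Set.range (Fin.cons w f : Fin (2 * r + 1) → V)) ≤ U' := by
            refine Submodule.span_le.mpr ?_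
            rw [Fin.range_cons]
            rintro x (rfl | hx)
            · exact hw
            · obtain ⟨i, rfl⟩ := hx
              exact hU''le (hf_mem i)
          have haU' : a ∈ U' := hsub hmem
          have : u ∈ U' := by
            have : u = a + t := by rw [ha]; abel
            rw [this]
            exact add_mem haU' (hU''le ht)
          exact huU' this
        have hli : LinearIndependent ℝ
            (Fin.cons a (Fin.cons w f) : Fin (2 * r + 1 + 1) → V) :=
          linearIndependent_fin_cons.mpr ⟨hli1, haW⟩
        refine ⟨r + 1, Fin.cons a (Fin.cons w f), (r + 1 : ℝ) * c, hli, ?_, ?_, ?_, ?_⟩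
        · intro i
          refine Fin.cases ?_ (fun j => ?_) i
          · exact sub_mem hu (hU'le (hU''le ht))
          · refine Fin.cases ?_ (fun k => ?_) j
            · exact hU'le hw
            · exact hU'le (hU''le (hf_mem k))
        · -- ξ ∈ spanPairs (span range f')
          have hasp : a ∈ Submodule.span ℝ (Set.range (Fin.cons a (Fin.cons w f) :
              Fin (2 * r + 1 + 1) → V)) :=
            Submodule.subset_span ⟨0, rfl⟩
          have hwsp : w ∈ Submodule.span ℝ (Set.range (Fin.cons a (Fin.cons w f) :
              Fin (2 * r + 1 + 1) → V)) :=
            Submodule.subset_span ⟨1, rfl⟩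
          have hmono : Submodule.span ℝ (Set.range f) ≤
              Submodule.span ℝ (Set.range (Fin.cons a (Fin.cons w f) :
                Fin (2 * r + 1 + 1) → V)) := by
            refine Submodule.span_mono ?_
            rintro x ⟨i, rfl⟩
            exact ⟨i.succ.succ, rfl⟩
          rw [hkey]
          exact add_mem (mem_spanPairs hasp hwsp) (spanPairs_mono hmono hξmem)
        · exact mul_ne_zero (by positivity) hc
        · -- the power computation
          have hcomm : Commute (ι ℝ a * ι ℝ w) η'' := commute_spanPairs hη''
          have hβ2 : (ι ℝ a * ι ℝ w) ^ 2 = 0 := by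
            rw [sq]; exact pair_sq_zero a w
          have hfrk : finrank ℝ (Submodule.span ℝ (Set.range f)) = 2 * r := by
            rw [finrank_span_eq_card hf_li, Fintype.card_fin]
          have hη1 : η'' ^ (r + 1) = 0 := by
            have hmem := pow_mem_span_PSet hξmem (r + 1)
            rwa [span_PSet_eq_bot (by omega), Submodule.mem_bot] at hmem
          have hι : (ιMulti ℝ (2 * (r + 1))) (Fin.cons a (Fin.cons w f)) =
              ι ℝ a * ι ℝ w * ιMulti ℝ (2 * r) f := by
            show (ιMulti ℝ (2 * r + 1 + 1)) (Fin.cons a (Fin.cons w f)) = _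
            rw [ιMulti_cons, ιMulti_cons, mul_assoc]
          rw [hkey, hcomm.add_pow]
          rw [Finset.sum_eq_single_of_mem 1 (by simp)]
          · rw [pow_one, Nat.add_sub_cancel, hpow, Nat.choose_one_right, hι,
              mul_smul_comm, smul_mul_assoc, ← (Nat.cast_commute (r + 1) _).eq,
              ← nsmul_eq_mul, ← Nat.cast_smul_eq_nsmul ℝ, smul_smul]
            congr 1
            push_cast
            ring
          · intro k hk hk1
            rcases Nat.lt_or_ge k 1 with h | h
            · interval_cases k
              rw [pow_zero, one_mul, Nat.sub_zero, hη1, zero_mul]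
            · have h2 : 2 ≤ k := by omega
              have : (ι ℝ a * ι ℝ w) ^ k = 0 := by
                calc (ι ℝ a * ι ℝ w) ^ k = (ι ℝ a * ι ℝ w) ^ 2 * (ι ℝ a * ι ℝ w) ^ (k - 2) := by
                      rw [← pow_add]; congr 1; omega
                  _ = 0 := by rw [hβ2, zero_mul]
              rw [this, zero_mul, zero_mul]

end SardAux

open SardAux in
/-- Polynomial equations of the abnormal set of the free step-2 Carnot group of even rank
`2s`: a pair `(v, ξ)` with `ξ` a bivector lies in `W ⊕ ⋀²W` for some subspace `W` of
dimension at most `2s − 2` if and only if `ξ^s = 0` and `ι(v) * ξ^(s−1) = 0`. -/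
theorem sard_abnormal_even_rank (V : Type*) [AddCommGroup V] [Module ℝ V]
    [FiniteDimensional ℝ V] (s : ℕ) (hs : 1 ≤ s)
    (hdim : Module.finrank ℝ V = 2 * s)
    (v : V) (ξ : ExteriorAlgebra ℝ V) (hξ : ξ ∈ ⋀[ℝ]^2 V) :
    (∃ W : Submodule ℝ V, Module.finrank ℝ W ≤ 2 * s - 2 ∧ v ∈ W ∧
        ξ ∈ Submodule.span ℝ
          {z : ExteriorAlgebra ℝ V | ∃ w₁ ∈ W, ∃ w₂ ∈ W, z = ι ℝ w₁ * ι ℝ w₂}) ↔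
      (ξ ^ s = 0 ∧ ι ℝ v * ξ ^ (s - 1) = 0) := by
  constructor
  · rintro ⟨W, hWrank, hvW, hξW⟩
    have hξW' : ξ ∈ spanPairs W := hξW
    constructor
    · have h := pow_mem_span_PSet hξW' s
      rwa [span_PSet_eq_bot (show finrank ℝ W < 2 * s by omega), Submodule.mem_bot] at h
    · have h := pow_mem_span_PSet hξW' (s - 1)
      have h2 := mul_mem_span_PSet hvW h
      rwa [span_PSet_eq_bot (show finrank ℝ W < 2 * (s - 1) + 1 by omega),
        Submodule.mem_bot] at h2
  · rintro ⟨h1, h2⟩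
    have hξtop : ξ ∈ spanPairs (⊤ : Submodule ℝ V) := by
      have hle : (⋀[ℝ]^2 V : Submodule ℝ (ExteriorAlgebra ℝ V)) ≤ spanPairs ⊤ := by
        rw [show (⋀[ℝ]^2 V : Submodule ℝ (ExteriorAlgebra ℝ V)) =
          LinearMap.range (ι ℝ : V →ₗ[ℝ] ExteriorAlgebra ℝ V) *
            LinearMap.range (ι ℝ : V →ₗ[ℝ] ExteriorAlgebra ℝ V) from pow_two _]
        refine Submodule.mul_le.mpr ?_
        rintro _ ⟨x, rfl⟩ _ ⟨y, rfl⟩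
        exact mem_spanPairs trivial trivial
      exact hle hξ
    obtain ⟨r, f, c, hli, hmem, hsp, hc, hpow⟩ :=
      main (finrank ℝ V) ⊤ (le_of_eq (finrank_top ℝ V)) ξ hξtop
    set W := Submodule.span ℝ (Set.range f) with hW
    have hfrk : finrank ℝ W = 2 * r := by
      rw [hW, finrank_span_eq_card hli, Fintype.card_fin]
    have hne : ξ ^ r ≠ 0 := by
      rw [hpow]
      exact smul_ne_zero hc (ιMulti_ne_zero hli)
    have hrs : r < s := by
      by_contra hge
      push_neg at hge
      exact hne (by rw [show r = s + (r - s) by omega, pow_add, h1, zero_mul])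
    rcases eq_or_lt_of_le (Nat.succ_le_of_lt hrs) with heq | hlt
    · refine ⟨W, by omega, ?_, hsp⟩
      have hr : s - 1 = r := by omega
      rw [hr, hpow, mul_smul_comm] at h2
      have h3 : ι ℝ v * ιMulti ℝ (2 * r) f = 0 := (smul_eq_zero.mp h2).resolve_left hc
      by_contra hv
      have hliv : LinearIndependent ℝ (Fin.cons v f : Fin (2 * r + 1) → V) :=
        linearIndependent_fin_cons.mpr ⟨hli, hv⟩
      exact ιMulti_ne_zero hliv (by rw [ιMulti_cons, h3])
    · refine ⟨W ⊔ (ℝ ∙ v), ?_, Submodule.mem_sup_right (Submodule.mem_span_singleton_self v),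
        spanPairs_mono le_sup_left hsp⟩
      have hv1 : finrank ℝ (ℝ ∙ v : Submodule ℝ V) ≤ 1 := by
        by_cases hv0 : v = 0
        · rw [hv0, Submodule.span_zero_singleton]
          simp
        · rw [finrank_span_singleton hv0]
      have hsum := Submodule.finrank_sup_add_finrank_inf_eq W (ℝ ∙ v)
      omega
end

section
/- Let E be a finite-dimensional real vector space, let f : E →ₗ[ℝ] E be a nilpotent endomorphism, and let U ⊆ E be a subspace such that U ⊔ (image of U under f) = E. Then there exists ε > 0 such that for every t with 0 < t < ε one has U ⊔ (image of U under exp(t•f)) = E, where exp(t•f) = Σ_k t^k f^k / k! (a finite sum, since f is nilpotent). -/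
/-- Core of the criterion for Sard's property: if `f` is a nilpotent endomorphism (say
`f^n = 0`) of a finite-dimensional real vector space `E` and `U` is a subspace with
`U + f(U) = E`, then `U + exp(t•f)(U) = E` for all sufficiently small `t > 0`, where
`exp(t•f) = Σ_k t^k f^k / k!` is the (finite) exponential sum. -/
theorem sard_exp_span_criterion (E : Type*) [AddCommGroup E] [Module ℝ E]
    [FiniteDimensional ℝ E]
    (f : E →ₗ[ℝ] E) (n : ℕ) (hf : f ^ n = 0)
    (U : Submodule ℝ E) (hU : U ⊔ U.map f = ⊤) :
    ∃ ε > (0 : ℝ), ∀ t : ℝ, 0 < t → t < ε →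
      U ⊔ U.map (∑ k ∈ Finset.range n, (t ^ k / (k.factorial : ℝ)) • f ^ k) = ⊤ := by
  -- trivial cases
  rcases Nat.lt_or_ge n 2 with hn | hn
  · -- n = 0 or n = 1
    interval_cases n
    · -- f^0 = 0 means id = 0, so E is trivial
      refine ⟨1, one_pos, fun t _ _ => ?_⟩
      have : ∀ x : E, x = 0 := by
        intro x
        have := LinearMap.ext_iff.1 hf x
        simpa using this
      have hsub : Subsingleton E := ⟨fun a b => by rw [this a, this b]⟩
      exact Subsingleton.elim _ _
    · -- f = 0, so U = ⊤
      have hf0 : f = 0 := by simpa using hf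
      have hU' : U = ⊤ := by
        rw [hf0] at hU
        simpa using hU
      refine ⟨1, one_pos, fun t _ _ => ?_⟩
      rw [hU', top_sup_eq]
  -- main case n ≥ 2
  obtain ⟨m, rfl⟩ : ∃ m, n = m + 1 := ⟨n - 1, by omega⟩
  set g : ℝ → (E →ₗ[ℝ] E) :=
    fun t => ∑ k ∈ Finset.range m, (t ^ k / ((k + 1).factorial : ℝ)) • f ^ (k + 1) with hg
  have key : ∀ t : ℝ, ∀ v : E,
      (∑ k ∈ Finset.range (m + 1), (t ^ k / (k.factorial : ℝ)) • f ^ k) v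
        = v + t • (g t v) := by
    intro t v
    rw [Finset.sum_range_succ' (fun k => (t ^ k / (k.factorial : ℝ)) • f ^ k) m]
    simp only [hg, LinearMap.add_apply, LinearMap.sum_apply, LinearMap.smul_apply, pow_zero,
      Nat.factorial_zero, Nat.cast_one, div_one, one_smul, Module.End.one_apply, Finset.smul_sum,
      smul_smul]
    rw [add_comm]
    congr 1
    refine Finset.sum_congr rfl fun k _ => ?_
    congr 1
    rw [pow_succ']
    ring
  have hg0 : g 0 = f := by
    have : g 0 = ∑ k ∈ Finset.range m, ((0:ℝ) ^ k / ((k + 1).factorial : ℝ)) • f ^ (k + 1) := rfl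
    rw [this, Finset.sum_eq_single 0]
    · simp
    · intro k _ hk
      have : (0:ℝ) ^ k = 0 := zero_pow hk
      simp [this]
    · intro h
      exact absurd (Finset.mem_range.2 (by omega)) h
  -- the coprod maps
  set L : ℝ → (U × U →ₗ[ℝ] E) :=
    fun t => LinearMap.coprod U.subtype ((g t) ∘ₗ U.subtype) with hL
  have hrange : ∀ t, LinearMap.range (L t) = U ⊔ U.map (g t) := by
    intro t
    rw [hL]
    simp [LinearMap.range_coprod, LinearMap.range_comp, Submodule.range_subtype]
  have hL0 : LinearMap.range (L 0) = ⊤ := by rw [hrange, hg0, hU]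
  obtain ⟨s, hs⟩ := (L 0).exists_rightInverse_of_surjective hL0
  -- matrix-valued function
  set d := Module.finrank ℝ E with hd
  set B := Module.finBasis ℝ E with hB
  set P : ℝ → Matrix (Fin d) (Fin d) ℝ :=
    fun t => LinearMap.toMatrix B B ((L t) ∘ₗ s) with hP
  have hLdecomp : ∀ t, (L t) ∘ₗ s = (L 0) ∘ₗ s
      + ∑ k ∈ Finset.range m, (t ^ k / ((k + 1).factorial : ℝ)) •
          ((f ^ (k + 1)) ∘ₗ U.subtype ∘ₗ (LinearMap.snd ℝ U U) ∘ₗ s)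
      - ∑ k ∈ Finset.range m, ((0:ℝ) ^ k / ((k + 1).factorial : ℝ)) •
          ((f ^ (k + 1)) ∘ₗ U.subtype ∘ₗ (LinearMap.snd ℝ U U) ∘ₗ s) := by
    intro t
    have hLt : ∀ u : ℝ, (L u) ∘ₗ s = (U.subtype ∘ₗ (LinearMap.fst ℝ U U) ∘ₗ s)
        + ∑ k ∈ Finset.range m, (u ^ k / ((k + 1).factorial : ℝ)) •
            ((f ^ (k + 1)) ∘ₗ U.subtype ∘ₗ (LinearMap.snd ℝ U U) ∘ₗ s) := by
      intro u
      ext x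
      simp [hL, hg, LinearMap.coprod_apply, Finset.sum_apply, map_sum]
    rw [hLt t, hLt 0]
    abel
  have hPcont : Continuous P := by
    have : P = fun t => LinearMap.toMatrix B B ((L 0) ∘ₗ s)
        + ∑ k ∈ Finset.range m, (t ^ k / ((k + 1).factorial : ℝ)) •
            LinearMap.toMatrix B B ((f ^ (k + 1)) ∘ₗ U.subtype ∘ₗ (LinearMap.snd ℝ U U) ∘ₗ s)
        - ∑ k ∈ Finset.range m, ((0:ℝ) ^ k / ((k + 1).factorial : ℝ)) •
            LinearMap.toMatrix B B ((f ^ (k + 1)) ∘ₗ U.subtype ∘ₗ (LinearMap.snd ℝ U U) ∘ₗ s) := by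
      funext t
      rw [hP]
      simp only [hLdecomp t, map_add, map_sub, map_sum, map_smul]
    rw [this]
    refine Continuous.sub (Continuous.add continuous_const ?_) continuous_const
    refine continuous_finset_sum _ fun k _ => ?_
    exact ((continuous_pow k).div_const _).smul continuous_const
  have hdet0 : (P 0).det = 1 := by
    rw [hP]
    simp only [hs]
    rw [show LinearMap.toMatrix B B LinearMap.id = 1 from LinearMap.toMatrix_id B]
    exact Matrix.det_one
  have hdetcont : Continuous fun t => (P t).det := hPcont.matrix_det
  have hev : ∀ᶠ t in nhds (0:ℝ), (P t).det ≠ 0 := by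
    have := hdetcont.continuousAt (x := 0)
    apply this.eventually_ne
    rw [hdet0]; exact one_ne_zero
  rw [Metric.eventually_nhds_iff] at hev
  obtain ⟨ε, hε, hball⟩ := hev
  refine ⟨ε, hε, fun t ht htε => ?_⟩
  have hdet : (P t).det ≠ 0 := by
    apply hball
    simp only [dist_zero_right, Real.norm_eq_abs, abs_of_pos ht]
    exact htε
  -- surjectivity of L t
  have hsurj : Function.Surjective ((L t) ∘ₗ s) := by
    have : LinearMap.det ((L t) ∘ₗ s) ≠ 0 := by
      rw [← LinearMap.det_toMatrix B]
      exact hdet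
    exact (LinearMap.equivOfDetNeZero _ this).surjective
  have hsurj' : Function.Surjective (⇑(L t) ∘ ⇑s) := by rwa [← LinearMap.coe_comp]
  have hLt_top : U ⊔ U.map (g t) = ⊤ := by
    rw [← hrange]
    rw [LinearMap.range_eq_top]
    exact hsurj'.of_comp
  -- transfer to the exponential
  rw [eq_top_iff, ← hLt_top]
  refine sup_le le_sup_left ?_
  rintro x ⟨v, hv, rfl⟩
  have hexp : (∑ k ∈ Finset.range (m + 1), (t ^ k / (k.factorial : ℝ)) • f ^ k) v
      = v + t • g t v := key t v
  have h1 : (∑ k ∈ Finset.range (m + 1), (t ^ k / (k.factorial : ℝ)) • f ^ k) v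
      ∈ U ⊔ U.map (∑ k ∈ Finset.range (m + 1), (t ^ k / (k.factorial : ℝ)) • f ^ k) :=
    Submodule.mem_sup_right ⟨v, hv, rfl⟩
  have h2 : v ∈ U ⊔ U.map (∑ k ∈ Finset.range (m + 1), (t ^ k / (k.factorial : ℝ)) • f ^ k) :=
    Submodule.mem_sup_left hv
  have h3 : t • g t v ∈ U ⊔ U.map (∑ k ∈ Finset.range (m + 1), (t ^ k / (k.factorial : ℝ)) • f ^ k) := by
    have := Submodule.sub_mem _ h1 h2
    rwa [hexp, add_sub_cancel_left] at this
  have h4 := Submodule.smul_mem _ t⁻¹ h3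
  rwa [smul_smul, inv_mul_cancel₀ (ne_of_gt ht), one_smul] at h4
end

section
/- Let R be a commutative ring, L a Lie algebra over R, N ∈ ℕ, and (V i)_{i ∈ ℤ} a family of submodules of L such that ⨆_i V i = L, ⁅V i, V j⁆ ⊆ V (i+j) for all i, j ∈ ℤ, and V i = 0 whenever |i| > N. Then for every X ∈ ⨆_{i ≥ 1} V i, the adjoint endomorphism ad X : L → L, Y ↦ ⁅X,Y⁆, is nilpotent. -/
/-!
The grading induces the decreasing filtration `F k = ⨆ i ≥ k, V i`, with
`⁅F a, F b⁆ ⊆ F (a + b)`. For `X ∈ F 1` the operator `ad X` therefore raises the filtration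
degree by one, and since `F (-N) = L` and `F (N + 1) = 0`, the power `(ad X) ^ (2N + 1)`
vanishes.
-/

section GradingFiltration

variable {ι R M : Type*} [Semiring R] [AddCommMonoid M] [Module R M]

def gradingFiltration [Preorder ι] (V : ι → Submodule R M) (k : ι) : Submodule R M :=
  ⨆ i ∈ Set.Ici k, V i

theorem gradingFiltration_eq_top [LinearOrder ι] {V : ι → Submodule R M} {k : ι}
    (hsup : ⨆ i, V i = ⊤) (hbd : ∀ i < k, V i = ⊥) : gradingFiltration V k = ⊤ := by
  refine eq_top_iff.2 (hsup ▸ iSup_le fun i => ?_)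
  rcases lt_or_ge i k with hi | hi
  · simp [hbd i hi]
  · exact le_iSup₂ (f := fun i (_ : i ∈ Set.Ici k) => V i) i hi

theorem gradingFiltration_eq_bot [Preorder ι] {V : ι → Submodule R M} {k : ι}
    (hbd : ∀ i, k ≤ i → V i = ⊥) : gradingFiltration V k = ⊥ := by
  simpa [gradingFiltration] using hbd

end GradingFiltration

section LieGrading

variable {ι R L : Type*} [CommRing R] [LieRing L] [LieAlgebra R L]
variable [AddCommMonoid ι] [PartialOrder ι] [IsOrderedAddMonoid ι] {V : ι → Submodule R L}

theorem lie_mem_gradingFiltration (hbr : ∀ i j, ∀ x ∈ V i, ∀ y ∈ V j, ⁅x, y⁆ ∈ V (i + j))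
    {a b : ι} {x y : L} (hx : x ∈ gradingFiltration V a) (hy : y ∈ gradingFiltration V b) :
    ⁅x, y⁆ ∈ gradingFiltration V (a + b) := by
  suffices Submodule.map₂ (LieAlgebra.ad R L : L →ₗ[R] Module.End R L)
      (gradingFiltration V a) (gradingFiltration V b) ≤ gradingFiltration V (a + b) from
    this (Submodule.apply_mem_map₂ _ hx hy)
  simp only [gradingFiltration, Submodule.map₂_iSup_left, Submodule.map₂_iSup_right, iSup_le_iff,
    Submodule.map₂_le]
  intro j hj i hi x hx y hy
  exact le_iSup₂ (f := fun i (_ : i ∈ Set.Ici (a + b)) => V i) (i + j) (add_le_add hi hj)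
    (hbr i j x hx y hy)

theorem ad_pow_apply_mem_gradingFiltration
    (hbr : ∀ i j, ∀ x ∈ V i, ∀ y ∈ V j, ⁅x, y⁆ ∈ V (i + j))
    {a b : ι} {X y : L} (hX : X ∈ gradingFiltration V a) (hy : y ∈ gradingFiltration V b)
    (n : ℕ) : (LieAlgebra.ad R L X ^ n) y ∈ gradingFiltration V (b + n • a) := by
  induction n with
  | zero => simpa using hy
  | succ n ih =>
    rw [pow_succ', Module.End.mul_apply, LieAlgebra.ad_apply, succ_nsmul, ← add_assoc, add_comm _ a]
    exact lie_mem_gradingFiltration hbr hX ih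

theorem ad_pow_eq_zero_of_mem_gradingFiltration
    (hbr : ∀ i j, ∀ x ∈ V i, ∀ y ∈ V j, ⁅x, y⁆ ∈ V (i + j)) {a b : ι} {n : ℕ}
    (htop : gradingFiltration V b = ⊤) (hbot : gradingFiltration V (b + n • a) = ⊥)
    {X : L} (hX : X ∈ gradingFiltration V a) : LieAlgebra.ad R L X ^ n = 0 := by
  ext y
  have := ad_pow_apply_mem_gradingFiltration hbr hX (htop ▸ Submodule.mem_top (x := y)) n
  simpa [hbot] using this

end LieGrading

/-- In a Lie algebra with a finite grading by submodules `(V i)_{i ∈ ℤ}` (so `⨆ i, V i = L`,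
`⁅V i, V j⁆ ⊆ V (i+j)`, and `V i = 0` for `|i| > N`), the adjoint endomorphism `ad X` is
nilpotent for every `X` in the positive part `⨆_{i ≥ 1} V i`. -/
theorem sard_graded_ad_nilpotent (R : Type*) [CommRing R] (L : Type*) [LieRing L]
    [LieAlgebra R L] (N : ℕ) (V : ℤ → Submodule R L)
    (hsup : ⨆ i : ℤ, V i = ⊤)
    (hbr : ∀ i j : ℤ, ∀ x ∈ V i, ∀ y ∈ V j, ⁅x, y⁆ ∈ V (i + j))
    (hbd : ∀ i : ℤ, (N : ℤ) < |i| → V i = ⊥) :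
    ∀ X ∈ ⨆ i ∈ {i : ℤ | 1 ≤ i}, V i, IsNilpotent (LieAlgebra.ad R L X) := by
  intro X hX
  have htop : gradingFiltration V (-N) = ⊤ :=
    gradingFiltration_eq_top hsup fun i hi => hbd i (by rw [lt_abs]; omega)
  have hbot : gradingFiltration V (-N + (2 * N + 1) • 1) = ⊥ :=
    gradingFiltration_eq_bot fun i hi => hbd i <| by
      rw [nsmul_eq_mul, mul_one] at hi
      rw [lt_abs]
      omega
  exact ⟨2 * N + 1, ad_pow_eq_zero_of_mem_gradingFiltration hbr htop hbot hX⟩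
end
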